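/- arXiv:2503.01341 — 4 statements merged into one kernel-verified Lean document; each statement's English description precedes it below -/
import Mathlib

section
/- Let n be a positive integer, H a fixed graph, and f : ℕ → ℕ a function satisfying (n−2)·(f(n)+1) − n·f(n−1) > 0. If the Turán number satisfies ex(n−1, H) ≤ f(n−1), then ex(n, H) ≤ f(n). -/
open SimpleGraph

/-- `H.ContainsCopy G` means `G` contains a subgraph isomorphic to `H`. -/
def SimpleGraph.ContainsCopy {W V : Type*} (H : SimpleGraph W) (G : SimpleGraph V) : Prop :=
  ∃ f : W → V, Function.Injective f ∧ ∀ ⦃a b : W⦄, H.Adj a b → G.Adj (f a) (f b)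

/-- The Turán number `ex(n, H)`: the maximum number of edges in a simple graph on `n`
vertices containing no subgraph isomorphic to `H`. -/
noncomputable def exNum {W : Type*} (n : ℕ) (H : SimpleGraph W) : ℕ :=
  sSup {m : ℕ | ∃ G : SimpleGraph (Fin n), ¬ H.ContainsCopy G ∧ G.edgeSet.ncard = m}

/-- The dumbbell graph `D_b(r₁, r₂; q)`: two cycles of lengths `r₁` (on vertices
`0, …, r₁-1`, closed by the chord `{0, r₁-1}`) and `r₂` (on vertices
`r₁+q-1, …, r₁+r₂+q-2`, closed by the chord `{r₁+q-1, r₁+r₂+q-2}`), joined by the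
path `r₁-1, r₁, …, r₁+q-1` of length `q` (for `q = 0` the two cycles share the
single vertex `r₁-1`). -/
def dumbbell (r₁ r₂ q : ℕ) : SimpleGraph (Fin (r₁ + r₂ + q - 1)) :=
  SimpleGraph.fromRel fun i j =>
    (i : ℕ) + 1 = (j : ℕ) ∨ ((i : ℕ) = 0 ∧ (j : ℕ) = r₁ - 1) ∨
      ((i : ℕ) = r₁ + q - 1 ∧ (j : ℕ) = r₁ + r₂ + q - 2)

/-- The theta graph `θ(1,2,2)`, i.e. `K₄` minus one edge. -/
def theta122 : SimpleGraph (Fin 4) :=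
  (⊤ : SimpleGraph (Fin 4)).deleteEdges {s(2, 3)}

theorem statement0 {W : Type*} (H : SimpleGraph W) (n : ℕ) (hn : 0 < n) (f : ℕ → ℕ)
    (hf : ((n : ℤ) - 2) * ((f n : ℤ) + 1) - (n : ℤ) * (f (n - 1) : ℤ) > 0)
    (hex : exNum (n - 1) H ≤ f (n - 1)) :
    exNum n H ≤ f n := by
  classical
  obtain ⟨k, rfl⟩ := Nat.exists_eq_succ_of_ne_zero hn.ne'
  simp only [Nat.succ_sub_one] at hex hf
  refine csSup_le' ?_
  rintro m ⟨G, hG, rfl⟩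
  rw [Set.ncard_eq_toFinset_card']
  change G.edgeFinset.card ≤ f (k + 1)
  by_contra hm
  push_neg at hm
  set m := G.edgeFinset.card with hmdef
  -- choose a minimum degree vertex
  obtain ⟨v, -, hv⟩ := Finset.exists_min_image Finset.univ (fun w => G.degree w) ⟨0, Finset.mem_univ 0⟩
  have hdegsum : (k + 1) * G.degree v ≤ 2 * m := by
    calc (k + 1) * G.degree v = ∑ _w : Fin (k+1), G.degree v := by
          simp [Finset.sum_const, mul_comm]
      _ ≤ ∑ w, G.degree w := Finset.sum_le_sum fun w _ => hv w (Finset.mem_univ w)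
      _ = 2 * m := G.sum_degrees_eq_twice_card_edges
  -- the deleted graph
  set G' : SimpleGraph (Fin k) := G.comap v.succAbove with hG'
  have hG'free : ¬ H.ContainsCopy G' := by
    intro ⟨g, hginj, hgadj⟩
    exact hG ⟨v.succAbove ∘ g, (Fin.succAbove_right_injective).comp hginj,
      fun a b hab => hgadj hab⟩
  have hcard : G'.edgeFinset.card = (G.edgeFinset \ G.incidenceFinset v).card := by
    apply Finset.card_bij (fun e _ => Sym2.map v.succAbove e)
    · intro e he
      induction e using Sym2.ind with
      | _ a b =>
        simp only [Sym2.map_pair_eq, Finset.mem_sdiff, mem_edgeFinset, mem_edgeSet,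
          mem_incidenceFinset] at *
        refine ⟨he, ?_⟩
        rintro ⟨-, hve⟩
        rcases Sym2.mem_iff.mp hve with h | h <;>
          exact (Fin.succAbove_ne v _) h.symm
    · intro e₁ he₁ e₂ he₂ h
      exact Sym2.map.injective Fin.succAbove_right_injective h
    · intro e he
      induction e using Sym2.ind with
      | _ a b =>
        simp only [Finset.mem_sdiff, mem_edgeFinset, mem_edgeSet, mem_incidenceFinset,
          SimpleGraph.incidenceSet, Set.mem_setOf_eq] at he
        obtain ⟨hab, hv'⟩ := he
        have ha : a ≠ v := by rintro rfl; exact hv' ⟨hab, Sym2.mem_mk_left _ _⟩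
        have hb : b ≠ v := by rintro rfl; exact hv' ⟨hab, Sym2.mem_mk_right _ _⟩
        obtain ⟨a', rfl⟩ := Fin.exists_succAbove_eq ha
        obtain ⟨b', rfl⟩ := Fin.exists_succAbove_eq hb
        exact ⟨s(a', b'), by simp only [mem_edgeFinset, mem_edgeSet]; exact hab, by simp⟩
  have hinc : G.incidenceFinset v ⊆ G.edgeFinset := by
    intro e he
    rw [mem_incidenceFinset] at he
    exact mem_edgeFinset.mpr he.1
  have hdeg_le : G.degree v ≤ m := by
    rw [← G.card_incidenceFinset_eq_degree]
    exact Finset.card_le_card hinc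
  have hcard2 : G'.edgeFinset.card = m - G.degree v := by
    rw [hcard, Finset.card_sdiff_of_subset hinc, G.card_incidenceFinset_eq_degree]
  -- G'.edgeFinset.card ≤ exNum k H
  have hbdd : BddAbove {m : ℕ | ∃ G : SimpleGraph (Fin k), ¬ H.ContainsCopy G ∧ G.edgeSet.ncard = m} := by
    refine ⟨Fintype.card (Sym2 (Fin k)), ?_⟩
    rintro x ⟨G₂, -, rfl⟩
    rw [Set.ncard_eq_toFinset_card']
    exact Finset.card_le_univ _
  have hle : m - G.degree v ≤ f k := by
    refine le_trans ?_ hex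
    rw [← hcard2]
    exact le_csSup hbdd ⟨G', hG'free, by rw [← SimpleGraph.coe_edgeFinset, Set.ncard_coe_finset]⟩
  -- arithmetic contradiction
  have h1 : ((k : ℤ) + 1) * (G.degree v : ℤ) ≤ 2 * m := by exact_mod_cast hdegsum
  have h2 : (m : ℤ) - (G.degree v : ℤ) ≤ f k := by
    have := (Nat.cast_le (α := ℤ)).mpr hle
    rwa [Nat.cast_sub hdeg_le] at this
  have h3 : (f (k+1) : ℤ) + 1 ≤ m := by exact_mod_cast hm
  simp only [Nat.succ_eq_add_one] at hf
  push_cast at hf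
  have hfk : (0:ℤ) ≤ f k := Nat.cast_nonneg _
  have hk1 : (1:ℤ) ≤ k := by nlinarith [hf, hfk, (Nat.cast_nonneg (α := ℤ) (f (k+1)))]
  nlinarith [hf, h1, h3, hfk,
    mul_le_mul_of_nonneg_left h2 (by linarith : (0:ℤ) ≤ (k:ℤ) + 1),
    mul_le_mul_of_nonneg_left h3 (by linarith : (0:ℤ) ≤ (k:ℤ) - 1)]
end

section
/- For every integer n ≥ 5, the Turán number of the bowtie graph satisfies ex(n, D_b(3,3;0)) = ⌊n²/4⌋ + 1. -/
open SimpleGraph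

set_option linter.unusedSectionVars false
set_option linter.unusedTactic false
set_option linter.unreachableTactic false

open Finset

section Aux

lemma bowtie_copy {V : Type*} {G : SimpleGraph V} {a b c d e : V}
    (hab : G.Adj a b) (hac : G.Adj a c) (hbc : G.Adj b c)
    (had : G.Adj a d) (hae : G.Adj a e) (hde : G.Adj d e)
    (hbd : b ≠ d) (hbe : b ≠ e) (hcd : c ≠ d) (hce : c ≠ e) :
    (dumbbell 3 3 0).ContainsCopy G := by
  refine ⟨![b, c, a, d, e], ?_, ?_⟩
  · intro i j hij
    have h1 := hab.ne; have h2 := hac.ne; have h3 := hbc.ne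
    have h4 := had.ne; have h5 := hae.ne; have h6 := hde.ne
    fin_cases i <;> fin_cases j <;> simp_all
  · intro i j hij
    have h := hij
    rw [dumbbell, SimpleGraph.fromRel_adj] at h
    fin_cases i <;> fin_cases j <;> simp_all [SimpleGraph.adj_comm]

variable {V : Type*} [Fintype V] [DecidableEq V]

lemma common_nbr (G : SimpleGraph V) [DecidableRel G.Adj] {u v : V}
    (h : Fintype.card V + 1 ≤ G.degree u + G.degree v) :
    ∃ w, G.Adj u w ∧ G.Adj v w := by
  have hu : (G.neighborFinset u ∩ G.neighborFinset v).Nonempty := by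
    rw [← Finset.card_pos]
    have h1 := Finset.card_inter_add_card_union (G.neighborFinset u) (G.neighborFinset v)
    have h2 : (G.neighborFinset u ∪ G.neighborFinset v).card ≤ Fintype.card V :=
      Finset.card_le_card (Finset.subset_univ _)
    simp only [card_neighborFinset_eq_degree] at h1
    omega
  obtain ⟨w, hw⟩ := hu
  simp only [Finset.mem_inter, mem_neighborFinset] at hw
  exact ⟨w, hw.1, hw.2⟩

lemma bowtie_of_minDeg (G : SimpleGraph V) [DecidableRel G.Adj]
    (h5 : 5 ≤ Fintype.card V)
    (hδ : ∀ v, Fintype.card V / 2 + 1 ≤ G.degree v) :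
    (dumbbell 3 3 0).ContainsCopy G := by
  have hsum : ∀ u w : V, ∃ t, G.Adj u t ∧ G.Adj w t := by
    intro u w
    refine common_nbr G ?_
    have h1 := hδ u; have h2 := hδ w; omega
  have hne : Nonempty V := Fintype.card_pos_iff.mp (by omega)
  obtain ⟨v⟩ := hne
  by_cases hM : ∃ a b c d : V, G.Adj v a ∧ G.Adj v b ∧ G.Adj v c ∧ G.Adj v d ∧
      G.Adj a b ∧ G.Adj c d ∧ a ≠ c ∧ a ≠ d ∧ b ≠ c ∧ b ≠ d
  · obtain ⟨a, b, c, d, h1, h2, h3, h4, h5', h6, h7, h8, h9, h10⟩ := hM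
    exact bowtie_copy h1 h2 h5' h3 h4 h6 h7 h8 h9 h10
  have hint : ∀ a b c d : V, G.Adj v a → G.Adj v b → G.Adj v c → G.Adj v d →
      G.Adj a b → G.Adj c d → a = c ∨ a = d ∨ b = c ∨ b = d := by
    intro a b c d h1 h2 h3 h4 h5' h6
    by_contra h; push_neg at h
    exact hM ⟨a, b, c, d, h1, h2, h3, h4, h5', h6, h.1, h.2.1, h.2.2.1, h.2.2.2⟩
  by_cases hT : ∃ x y z : V, G.Adj v x ∧ G.Adj v y ∧ G.Adj v z ∧
      G.Adj x y ∧ G.Adj x z ∧ G.Adj y z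
  · -- triangle in N(v); forces card V = 5, K4 plus fifth vertex
    obtain ⟨x, y, z, hvx, hvy, hvz, hxy, hxz, hyz⟩ := hT
    have hNv : ∀ u, G.Adj v u → u = x ∨ u = y ∨ u = z := by
      intro u hvu
      by_contra hu; push_neg at hu
      obtain ⟨w, huw, hvw⟩ := hsum u v
      have e1 := hint u w x y hvu hvw hvx hvy huw hxy
      have e2 := hint u w x z hvu hvw hvx hvz huw hxz
      have e3 := hint u w y z hvu hvw hvy hvz huw hyz
      rcases hu with ⟨hux, huy, huz⟩
      have f1 : w = x ∨ w = y := by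
        rcases e1 with h|h|h|h
        exacts [absurd h hux, absurd h huy, Or.inl h, Or.inr h]
      have f2 : w = x ∨ w = z := by
        rcases e2 with h|h|h|h
        exacts [absurd h hux, absurd h huz, Or.inl h, Or.inr h]
      have f3 : w = y ∨ w = z := by
        rcases e3 with h|h|h|h
        exacts [absurd h huy, absurd h huz, Or.inl h, Or.inr h]
      rcases f1 with h1|h1 <;> rcases f2 with h2|h2 <;> rcases f3 with h3|h3
      · exact hxy.ne (h1.symm.trans h3)
      · exact hxz.ne (h1.symm.trans h3)
      · exact hxz.ne (h1.symm.trans h2)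
      · exact hxz.ne (h1.symm.trans h2)
      · exact hxy.ne (h2.symm.trans h1)
      · exact hxy.ne (h2.symm.trans h1)
      · exact hyz.ne (h1.symm.trans h2)
      · exact hyz.ne (h1.symm.trans h2)
    have hdeg : G.degree v ≤ 3 := by
      rw [← card_neighborFinset_eq_degree]
      refine le_trans (Finset.card_le_card (s := G.neighborFinset v)
        (t := {x, y, z}) ?_) ?_
      · intro u hu
        rw [mem_neighborFinset] at hu
        rcases hNv u hu with h|h|h <;> simp [h]
      · refine le_trans (Finset.card_insert_le _ _) ?_
        have := Finset.card_insert_le y ({z} : Finset V)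
        simp at this ⊢; omega
    have hn5 : Fintype.card V = 5 := by have := hδ v; omega
    have hvx' := hvx.ne; have hvy' := hvy.ne; have hvz' := hvz.ne
    have hxy' := hxy.ne; have hxz' := hxz.ne; have hyz' := hyz.ne
    obtain ⟨w, hw⟩ : ∃ w, w ∉ ({v, x, y, z} : Finset V) := by
      by_contra h; push_neg at h
      have hsub : (Finset.univ : Finset V) ⊆ {v, x, y, z} := fun w _ => h w
      have h1 := Finset.card_le_card hsub
      rw [Finset.card_univ, hn5] at h1
      have h2 : ({v, x, y, z} : Finset V).card ≤ 4 := by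
        refine le_trans (Finset.card_insert_le _ _) ?_
        refine Nat.add_le_add_right (le_trans (Finset.card_insert_le _ _) ?_) 1
        refine Nat.add_le_add_right (le_trans (Finset.card_insert_le _ _) ?_) 1
        simp
      omega
    simp only [Finset.mem_insert, Finset.mem_singleton, not_or] at hw
    obtain ⟨hwv, hwx, hwy, hwz⟩ := hw
    -- every vertex is one of v,x,y,z,w
    have hcard : ({v, x, y, z, w} : Finset V).card = 5 := by
      rw [Finset.card_insert_of_notMem (by simp_all [eq_comm]),
          Finset.card_insert_of_notMem (by simp_all [eq_comm]),
          Finset.card_insert_of_notMem (by simp_all [eq_comm]),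
          Finset.card_insert_of_notMem (by simp_all [eq_comm]),
          Finset.card_singleton]
    have huniv : ∀ u : V, u = v ∨ u = x ∨ u = y ∨ u = z ∨ u = w := by
      intro u
      have : ({v, x, y, z, w} : Finset V) = Finset.univ :=
        Finset.eq_univ_of_card _ (by rw [hcard, hn5])
      have hu : u ∈ ({v, x, y, z, w} : Finset V) := this ▸ Finset.mem_univ u
      simpa using hu
    -- w is adjacent to at least two of x, y, z
    have hS : 2 ≤ (({x, y, z} : Finset V).filter (fun u => G.Adj w u)).card := by
      have hsub : G.neighborFinset w ⊆
          insert v (({x, y, z} : Finset V).filter (fun u => G.Adj w u)) := by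
        intro u hu
        rw [mem_neighborFinset] at hu
        rcases huniv u with h|h|h|h|h
        · simp [h]
        all_goals subst h
        · simp [Finset.mem_filter, hu]
        · simp [Finset.mem_filter, hu]
        · simp [Finset.mem_filter, hu]
        · exact absurd rfl hu.ne'
      have h1 := Finset.card_le_card hsub
      have h2 := Finset.card_insert_le v (({x, y, z} : Finset V).filter (fun u => G.Adj w u))
      have h3 := hδ w
      rw [card_neighborFinset_eq_degree] at h1
      omega
    obtain ⟨a, ha, b, hb, hab⟩ := Finset.one_lt_card.mp hS
    simp only [Finset.mem_filter, Finset.mem_insert, Finset.mem_singleton] at ha hb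
    obtain ⟨ha1, hwa⟩ := ha
    obtain ⟨hb1, hwb⟩ := hb
    -- helper: triangle vertices p q r (perm of x y z), w adj p and q ⇒ bowtie at p
    have helper : ∀ p q r : V, G.Adj v p → G.Adj v q → G.Adj v r →
        G.Adj p q → G.Adj p r → G.Adj q r → G.Adj w p → G.Adj w q →
        q ≠ r → w ≠ r → (dumbbell 3 3 0).ContainsCopy G := by
      intro p q r h1 h2 h3 h4 h5' h6 h7 h8 h9 h10
      -- center p: triangles (p,q,w) and (p,v,r)
      exact bowtie_copy h4 h7.symm h8.symm h1.symm h5' h3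
        h2.ne' (h9) hwv h10
    rcases ha1 with h1|h1|h1 <;> rcases hb1 with h2|h2|h2
    · exact absurd (h1.trans h2.symm) hab
    · exact helper x y z hvx hvy hvz hxy hxz hyz (h1 ▸ hwa) (h2 ▸ hwb) hyz' hwz
    · exact helper x z y hvx hvz hvy hxz hxy hyz.symm (h1 ▸ hwa) (h2 ▸ hwb) (Ne.symm hyz') hwy
    · exact helper y x z hvy hvx hvz hxy.symm hyz hxz (h1 ▸ hwa) (h2 ▸ hwb) hxz' hwz
    · exact absurd (h1.trans h2.symm) hab
    · exact helper y z x hvy hvz hvx hyz hxy.symm hxz.symm (h1 ▸ hwa) (h2 ▸ hwb) (Ne.symm hxz') hwx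
    · exact helper z x y hvz hvx hvy hxz.symm hyz.symm hxy (h1 ▸ hwa) (h2 ▸ hwb) hxy' hwy
    · exact helper z y x hvz hvy hvx hyz.symm hxz.symm hxy.symm (h1 ▸ hwa) (h2 ▸ hwb) (Ne.symm hxy') hwx
    · exact absurd (h1.trans h2.symm) hab
  · -- no triangle in N(v): star structure
    push_neg at hT
    obtain ⟨x, hvx, -⟩ := hsum v v
    obtain ⟨c, hxc, hvc⟩ := hsum x v
    have hstar : (∀ p q, G.Adj v p → G.Adj v q → G.Adj p q → p = c ∨ q = c) ∨
        (∀ p q, G.Adj v p → G.Adj v q → G.Adj p q → p = x ∨ q = x) := by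
      by_cases hc : ∀ p q, G.Adj v p → G.Adj v q → G.Adj p q → p = c ∨ q = c
      · exact Or.inl hc
      · push_neg at hc
        obtain ⟨p, q, hvp, hvq, hpq, hpc, hqc⟩ := hc
        have hx' : ∃ q', G.Adj v q' ∧ G.Adj x q' ∧ q' ≠ c := by
          rcases hint p q x c hvp hvq hvx hvc hpq hxc with h|h|h|h
          · exact ⟨q, hvq, h ▸ hpq, hqc⟩
          · exact absurd h hpc
          · exact ⟨p, hvp, h ▸ hpq.symm, hpc⟩
          · exact absurd h hqc
        obtain ⟨q', hvq', hxq', hq'c⟩ := hx'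
        right
        intro r s hvr hvs hrs
        by_contra hcon
        push_neg at hcon
        obtain ⟨hrx, hsx⟩ := hcon
        have hnadj : ¬ G.Adj q' c := hT x q' c hvx hvq' hvc hxq' hxc
        have e1 := hint r s x c hvr hvs hvx hvc hrs hxc
        have e2 := hint r s x q' hvr hvs hvx hvq' hrs hxq'
        have f1 : r = c ∨ s = c := by
          rcases e1 with h|h|h|h
          exacts [absurd h hrx, Or.inl h, absurd h hsx, Or.inr h]
        have f2 : r = q' ∨ s = q' := by
          rcases e2 with h|h|h|h
          exacts [absurd h hrx, Or.inl h, absurd h hsx, Or.inr h]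
        rcases f1 with h1|h1 <;> rcases f2 with h2|h2
        · exact hq'c (h2.symm.trans h1)
        · rw [h1, h2] at hrs; exact hnadj hrs.symm
        · rw [h2, h1] at hrs; exact hnadj hrs
        · exact hq'c (h2.symm.trans h1)
    obtain ⟨c₀, x₀, hvc₀, hvx₀, hx₀c₀, hstar₀⟩ :
        ∃ c₀ x₀, G.Adj v c₀ ∧ G.Adj v x₀ ∧ G.Adj x₀ c₀ ∧
          ∀ p q, G.Adj v p → G.Adj v q → G.Adj p q → p = c₀ ∨ q = c₀ := by
      rcases hstar with h|h
      · exact ⟨c, x, hvc, hvx, hxc, h⟩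
      · exact ⟨x, c, hvx, hvc, hxc.symm, h⟩
    obtain ⟨y, hvy, hyx₀, hyc₀⟩ : ∃ y, G.Adj v y ∧ y ≠ x₀ ∧ y ≠ c₀ := by
      have h1 : 0 < (G.neighborFinset v \ {x₀, c₀}).card := by
        have h2 := Finset.le_card_sdiff ({x₀, c₀} : Finset V) (G.neighborFinset v)
        have h3 : ({x₀, c₀} : Finset V).card ≤ 2 := by
          refine le_trans (Finset.card_insert_le _ _) ?_; simp
        have h4 := hδ v
        rw [card_neighborFinset_eq_degree] at h2
        omega
      obtain ⟨y, hy⟩ := Finset.card_pos.mp h1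
      simp only [Finset.mem_sdiff, mem_neighborFinset, Finset.mem_insert,
        Finset.mem_singleton, not_or] at hy
      exact ⟨y, hy.1, hy.2.1, hy.2.2⟩
    have hyc : G.Adj y c₀ := by
      obtain ⟨u, hyu, hvu⟩ := hsum y v
      rcases hstar₀ y u hvy hvu hyu with h|h
      · exact absurd h hyc₀
      · exact h ▸ hyu
    obtain ⟨w, hx₀w, hwv, hwc₀⟩ : ∃ w, G.Adj x₀ w ∧ w ≠ v ∧ w ≠ c₀ := by
      have h1 : 0 < (G.neighborFinset x₀ \ {v, c₀}).card := by
        have h2 := Finset.le_card_sdiff ({v, c₀} : Finset V) (G.neighborFinset x₀)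
        have h3 : ({v, c₀} : Finset V).card ≤ 2 := by
          refine le_trans (Finset.card_insert_le _ _) ?_; simp
        have h4 := hδ x₀
        rw [card_neighborFinset_eq_degree] at h2
        omega
      obtain ⟨w, hw⟩ := Finset.card_pos.mp h1
      simp only [Finset.mem_sdiff, mem_neighborFinset, Finset.mem_insert,
        Finset.mem_singleton, not_or] at hw
      exact ⟨w, hw.1, hw.2.1, hw.2.2⟩
    obtain ⟨u, hx₀u, hwu⟩ := hsum x₀ w
    by_cases huv : u = v
    · subst huv
      rcases hstar₀ x₀ w hvx₀ hwu.symm hx₀w with h|h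
      · exact absurd h hx₀c₀.ne
      · exact absurd h hwc₀
    by_cases huc : u = c₀
    · subst huc
      have hwv' : ¬ G.Adj v w := by
        intro h
        rcases hstar₀ x₀ w hvx₀ h hx₀w with h'|h'
        · exact absurd h' hx₀c₀.ne
        · exact absurd h' hwc₀
      have hwy : w ≠ y := fun h => hwv' (h ▸ hvy)
      exact bowtie_copy hx₀c₀.symm hwu.symm hx₀w hvc₀.symm hyc.symm hvy
        hvx₀.ne' (Ne.symm hyx₀) hwv hwy
    · exact bowtie_copy hvx₀.symm hx₀c₀ hvc₀ hx₀w hx₀u hwu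
        (Ne.symm hwv) (fun h => huv h.symm) (Ne.symm hwc₀) (fun h => huc h.symm)


lemma fresh (s : Finset V) (h : s.card < Fintype.card V) : ∃ w, w ∉ s := by
  by_contra hc; push_neg at hc
  have hs : (Finset.univ : Finset V) ⊆ s := fun w _ => hc w
  have := Finset.card_le_card hs
  rw [Finset.card_univ] at this; omega

section patterns
variable {G : SimpleGraph V}

/-- pattern A : all pairs adjacent except possibly {x1,x2} and {x3,x4} -/
lemma patternA {x1 x2 x3 x4 x5 : V}
    (d12 : x1 ≠ x2) (d13 : x1 ≠ x3) (d14 : x1 ≠ x4) (d15 : x1 ≠ x5)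
    (d23 : x2 ≠ x3) (d24 : x2 ≠ x4) (d25 : x2 ≠ x5)
    (d34 : x3 ≠ x4) (d35 : x3 ≠ x5) (d45 : x4 ≠ x5)
    (h : ∀ u w : V, u ≠ w → s(u, w) ≠ s(x1, x2) → s(u, w) ≠ s(x3, x4) → G.Adj u w) :
    (dumbbell 3 3 0).ContainsCopy G := by
  refine bowtie_copy (a := x5) (b := x1) (c := x3) (d := x2) (e := x4)
    (h _ _ (Ne.symm d15) ?_ ?_) (h _ _ (Ne.symm d35) ?_ ?_) (h _ _ d13 ?_ ?_)
    (h _ _ (Ne.symm d25) ?_ ?_) (h _ _ (Ne.symm d45) ?_ ?_) (h _ _ d24 ?_ ?_)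
    d12 d14 (Ne.symm d23) d34 <;>
  · simp only [ne_eq, Sym2.eq_iff, not_or]
    tauto

/-- pattern B : all pairs adjacent except possibly {x1,x2} and {x2,x3} -/
lemma patternB {x1 x2 x3 x4 x5 : V}
    (d12 : x1 ≠ x2) (d13 : x1 ≠ x3) (d14 : x1 ≠ x4) (d15 : x1 ≠ x5)
    (d23 : x2 ≠ x3) (d24 : x2 ≠ x4) (d25 : x2 ≠ x5)
    (d34 : x3 ≠ x4) (d35 : x3 ≠ x5) (d45 : x4 ≠ x5)
    (h : ∀ u w : V, u ≠ w → s(u, w) ≠ s(x1, x2) → s(u, w) ≠ s(x2, x3) → G.Adj u w) :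
    (dumbbell 3 3 0).ContainsCopy G := by
  refine bowtie_copy (a := x4) (b := x1) (c := x3) (d := x2) (e := x5)
    (h _ _ (Ne.symm d14) ?_ ?_) (h _ _ (Ne.symm d34) ?_ ?_) (h _ _ d13 ?_ ?_)
    (h _ _ (Ne.symm d24) ?_ ?_) (h _ _ d45 ?_ ?_) (h _ _ d25 ?_ ?_)
    d12 d15 (Ne.symm d23) d35 <;>
  · simp only [ne_eq, Sym2.eq_iff, not_or]
    tauto

/-- all pairs adjacent except possibly {a,b} -/
lemma onlyOnePair (G : SimpleGraph V) {a b : V} (h5 : Fintype.card V = 5)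
    (h : ∀ x y : V, x ≠ y → s(x, y) ≠ s(a, b) → G.Adj x y) :
    (dumbbell 3 3 0).ContainsCopy G := by
  have hne : Nonempty V := Fintype.card_pos_iff.mp (by omega)
  by_cases hab : a = b
  · subst hab
    have h' : ∀ x y : V, x ≠ y → G.Adj x y := by
      intro x y hxy
      refine h x y hxy ?_
      simp only [ne_eq, Sym2.eq_iff]
      rintro (⟨rfl, rfl⟩ | ⟨rfl, rfl⟩) <;> exact hxy rfl
    obtain ⟨x1⟩ := hne
    obtain ⟨x2, h2⟩ := fresh {x1} (by rw [h5]; have := Finset.card_singleton x1; omega)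
    obtain ⟨x3, h3⟩ := fresh {x1, x2} (by rw [h5]; have : ({x1, x2} : Finset V).card ≤ 2 := Finset.card_le_two; omega)
    obtain ⟨x4, h4⟩ := fresh {x1, x2, x3} (by rw [h5]; have : ({x1, x2, x3} : Finset V).card ≤ 3 := Finset.card_le_three; omega)
    obtain ⟨x5, h5'⟩ := fresh {x1, x2, x3, x4} (by
      rw [h5]
      have h6 : ({x1, x2, x3, x4} : Finset V).card ≤ 4 :=
        le_trans (Finset.card_insert_le _ _) (by have : ({x2, x3, x4} : Finset V).card ≤ 3 := Finset.card_le_three; omega)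
      omega)
    simp only [Finset.mem_insert, Finset.mem_singleton, not_or] at h2 h3 h4 h5'
    exact patternA (Ne.symm h2) (Ne.symm h3.1) (Ne.symm h4.1) (Ne.symm h5'.1)
      (Ne.symm h3.2) (Ne.symm h4.2.1) (Ne.symm h5'.2.1) (Ne.symm h4.2.2) (Ne.symm h5'.2.2.1)
      (Ne.symm h5'.2.2.2) (fun u w hu _ _ => h' u w hu)
  · obtain ⟨x3, h3⟩ := fresh {a, b} (by rw [h5]; have : ({a, b} : Finset V).card ≤ 2 := Finset.card_le_two; omega)
    obtain ⟨x4, h4⟩ := fresh {a, b, x3} (by rw [h5]; have : ({a, b, x3} : Finset V).card ≤ 3 := Finset.card_le_three; omega)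
    obtain ⟨x5, h5'⟩ := fresh {a, b, x3, x4} (by
      rw [h5]
      have h6 : ({a, b, x3, x4} : Finset V).card ≤ 4 :=
        le_trans (Finset.card_insert_le _ _) (by have : ({b, x3, x4} : Finset V).card ≤ 3 := Finset.card_le_three; omega)
      omega)
    simp only [Finset.mem_insert, Finset.mem_singleton, not_or] at h3 h4 h5'
    exact patternA hab (Ne.symm h3.1) (Ne.symm h4.1) (Ne.symm h5'.1)
      (Ne.symm h3.2) (Ne.symm h4.2.1) (Ne.symm h5'.2.1) (Ne.symm h4.2.2) (Ne.symm h5'.2.2.1)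
      (Ne.symm h5'.2.2.2) (fun u w hu h1 _ => h u w hu h1)

end patterns

lemma subset_pair {α : Type*} [DecidableEq α] [Nonempty α] (s : Finset α) (h : s.card ≤ 2) :
    ∃ a b, s ⊆ {a, b} := by
  obtain h0 | h1 | h2 : s.card = 0 ∨ s.card = 1 ∨ s.card = 2 := by omega
  · rw [Finset.card_eq_zero] at h0
    obtain ⟨a⟩ := ‹Nonempty α›
    exact ⟨a, a, by simp [h0]⟩
  · rw [Finset.card_eq_one] at h1
    obtain ⟨a, rfl⟩ := h1
    exact ⟨a, a, by intro x hx; simp_all⟩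
  · rw [Finset.card_eq_two] at h2
    obtain ⟨a, b, -, rfl⟩ := h2
    exact ⟨a, b, subset_rfl⟩

lemma base5 (G : SimpleGraph V) [DecidableRel G.Adj] (h5 : Fintype.card V = 5)
    (h8 : 8 ≤ G.edgeFinset.card) : (dumbbell 3 3 0).ContainsCopy G := by
  have hne : Nonempty V := Fintype.card_pos_iff.mp (by omega)
  have hcompl : Gᶜ.edgeFinset.card ≤ 2 := by
    have hdisj : Disjoint G.edgeFinset Gᶜ.edgeFinset := by
      rw [Finset.disjoint_left]
      intro e he he'
      rw [SimpleGraph.mem_edgeFinset] at he he'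
      induction e with
      | _ u w =>
        rw [SimpleGraph.mem_edgeSet] at he he'
        exact he'.2 he
    have hsub : G.edgeFinset ∪ Gᶜ.edgeFinset ⊆ (⊤ : SimpleGraph V).edgeFinset :=
      Finset.union_subset (SimpleGraph.edgeFinset_mono le_top)
        (SimpleGraph.edgeFinset_mono le_top)
    have h1 := Finset.card_le_card hsub
    rw [Finset.card_union_of_disjoint hdisj,
      SimpleGraph.card_edgeFinset_top_eq_card_choose_two, h5] at h1
    have h2 : Nat.choose 5 2 = 10 := by decide
    omega
  haveI : Nonempty (Sym2 V) := ⟨s(hne.some, hne.some)⟩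
  obtain ⟨p, q, hsub⟩ := subset_pair _ hcompl
  induction p with
  | _ a b =>
  induction q with
  | _ c d =>
  have hadj : ∀ x y : V, x ≠ y → s(x, y) ≠ s(a, b) → s(x, y) ≠ s(c, d) → G.Adj x y := by
    intro x y hxy h1 h2
    by_contra hA
    have h3 : s(x, y) ∈ Gᶜ.edgeFinset := by
      rw [SimpleGraph.mem_edgeFinset, SimpleGraph.mem_edgeSet]
      exact ⟨hxy, hA⟩
    have h4 := hsub h3
    simp only [Finset.mem_insert, Finset.mem_singleton] at h4
    tauto
  clear hsub hcompl h8
  by_cases hab : a = b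
  · refine onlyOnePair G h5 (fun x y hxy h2 => hadj x y hxy ?_ h2)
    subst hab
    simp only [ne_eq, Sym2.eq_iff]
    rintro (⟨rfl, rfl⟩ | ⟨rfl, rfl⟩) <;> exact hxy rfl
  by_cases hcd : c = d
  · refine onlyOnePair G h5 (fun x y hxy h2 => hadj x y hxy h2 ?_)
    subst hcd
    simp only [ne_eq, Sym2.eq_iff]
    rintro (⟨rfl, rfl⟩ | ⟨rfl, rfl⟩) <;> exact hxy rfl
  by_cases hpq : s(a, b) = s(c, d)
  · exact onlyOnePair G h5 (fun x y hxy h2 => hadj x y hxy h2 (hpq ▸ h2))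
  have freshAB : ∀ u v w : V, ∃ z z', z ∉ ({u, v, w} : Finset V) ∧
      z' ∉ ({u, v, w, z} : Finset V) := by
    intro u v w
    obtain ⟨z, hz⟩ := fresh {u, v, w} (by rw [h5]; have : ({u, v, w} : Finset V).card ≤ 3 := Finset.card_le_three; omega)
    obtain ⟨z', hz'⟩ := fresh {u, v, w, z} (by
      rw [h5]
      have h6 : ({u, v, w, z} : Finset V).card ≤ 4 :=
        le_trans (Finset.card_insert_le _ _) (by have : ({v, w, z} : Finset V).card ≤ 3 := Finset.card_le_three; omega)
      omega)
    exact ⟨z, z', hz, hz'⟩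
  by_cases hbc : b = c
  · subst hbc
    have had : a ≠ d := by rintro rfl; exact hpq Sym2.eq_swap
    obtain ⟨x4, x5, hx4, hx5⟩ := freshAB a b d
    simp only [Finset.mem_insert, Finset.mem_singleton, not_or] at hx4 hx5
    exact patternB hab had (Ne.symm hx4.1) (Ne.symm hx5.1) hcd (Ne.symm hx4.2.1)
      (Ne.symm hx5.2.1) (Ne.symm hx4.2.2) (Ne.symm hx5.2.2.1) (Ne.symm hx5.2.2.2) hadj
  by_cases hbd : b = d
  · subst hbd
    have hac : a ≠ c := by
      rintro rfl; exact hpq rfl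
    obtain ⟨x4, x5, hx4, hx5⟩ := freshAB a b c
    simp only [Finset.mem_insert, Finset.mem_singleton, not_or] at hx4 hx5
    refine patternB hab hac (Ne.symm hx4.1) (Ne.symm hx5.1) hbc (Ne.symm hx4.2.1)
      (Ne.symm hx5.2.1) (Ne.symm hx4.2.2) (Ne.symm hx5.2.2.1) (Ne.symm hx5.2.2.2) ?_
    intro u w hu h1 h2
    refine hadj u w hu h1 ?_
    rwa [show s(c, b) = s(b, c) from Sym2.eq_swap]
  by_cases hac : a = c
  · subst hac
    obtain ⟨x4, x5, hx4, hx5⟩ := freshAB b a d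
    simp only [Finset.mem_insert, Finset.mem_singleton, not_or] at hx4 hx5
    refine patternB (Ne.symm hab) (fun h => hbd h) (Ne.symm hx4.1) (Ne.symm hx5.1) hcd
      (Ne.symm hx4.2.1) (Ne.symm hx5.2.1) (Ne.symm hx4.2.2) (Ne.symm hx5.2.2.1)
      (Ne.symm hx5.2.2.2) ?_
    intro u w hu h1 h2
    refine hadj u w hu ?_ h2
    rwa [show s(a, b) = s(b, a) from Sym2.eq_swap]
  by_cases had : a = d
  · subst had
    obtain ⟨x4, x5, hx4, hx5⟩ := freshAB b a c
    simp only [Finset.mem_insert, Finset.mem_singleton, not_or] at hx4 hx5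
    refine patternB (Ne.symm hab) (fun h => hbc h) (Ne.symm hx4.1) (Ne.symm hx5.1)
      (fun h => hcd h.symm) (Ne.symm hx4.2.1) (Ne.symm hx5.2.1) (Ne.symm hx4.2.2)
      (Ne.symm hx5.2.2.1) (Ne.symm hx5.2.2.2) ?_
    intro u w hu h1 h2
    refine hadj u w hu ?_ ?_
    · rwa [show s(a, b) = s(b, a) from Sym2.eq_swap]
    · rwa [show s(c, a) = s(a, c) from Sym2.eq_swap]
  · obtain ⟨x5, hx5⟩ := fresh {a, b, c, d} (by
      rw [h5]
      have h6 : ({a, b, c, d} : Finset V).card ≤ 4 :=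
        le_trans (Finset.card_insert_le _ _) (by have : ({b, c, d} : Finset V).card ≤ 3 := Finset.card_le_three; omega)
      omega)
    simp only [Finset.mem_insert, Finset.mem_singleton, not_or] at hx5
    exact patternA hab hac had (Ne.symm hx5.1) hbc hbd (Ne.symm hx5.2.1) hcd
      (Ne.symm hx5.2.2.1) (Ne.symm hx5.2.2.2) hadj


lemma contains_induce {W : Type*} {H : SimpleGraph W} {G : SimpleGraph V} {s : Set V}
    (h : H.ContainsCopy (G.induce s)) : H.ContainsCopy G := by
  obtain ⟨f, hinj, hadj⟩ := h
  refine ⟨fun w => (f w : V), fun a b hab => by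
    exact hinj (Subtype.val_injective hab), fun a b hab => ?_⟩
  have := hadj hab
  simpa using this

lemma card_edge_delete (G : SimpleGraph V) [DecidableRel G.Adj] (v : V) :
    G.edgeFinset.card ≤ (G.induce {w : V | w ≠ v}).edgeFinset.card + G.degree v := by
  classical
  have hinc : G.incidenceFinset v ⊆ G.edgeFinset := by
    intro e he
    rw [mem_incidenceFinset] at he
    rw [mem_edgeFinset]
    exact he.1
  have h1 := Finset.card_sdiff_add_card_eq_card hinc
  have h2 := G.card_incidenceFinset_eq_degree v
  have h3 : G.edgeFinset \ G.incidenceFinset v ⊆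
      (G.induce {w : V | w ≠ v}).edgeFinset.image (Sym2.map Subtype.val) := by
    intro e he
    rw [Finset.mem_sdiff] at he
    obtain ⟨he1, he2⟩ := he
    induction e with
    | _ u w =>
      rw [mem_edgeFinset, mem_edgeSet] at he1
      rw [mem_incidenceFinset] at he2
      have hu : u ≠ v := by
        rintro rfl
        exact he2 ⟨he1, Sym2.mem_mk_left _ _⟩
      have hw : w ≠ v := by
        rintro rfl
        exact he2 ⟨he1, Sym2.mem_mk_right _ _⟩
      rw [Finset.mem_image]
      refine ⟨s(⟨u, hu⟩, ⟨w, hw⟩), ?_, by simp⟩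
      rw [mem_edgeFinset, mem_edgeSet]
      simpa using he1
  have h4 := Finset.card_le_card h3
  have h5 := Finset.card_image_le (f := Sym2.map (Subtype.val : {w : V | w ≠ v} → V))
    (s := (G.induce {w : V | w ≠ v}).edgeFinset)
  omega

lemma sq_div_four_even (k : ℕ) : (2 * k) ^ 2 / 4 = k * k := by
  rw [show (2 * k) ^ 2 = 4 * (k * k) by ring, Nat.mul_div_cancel_left _ (by norm_num)]

lemma sq_div_four_odd (k : ℕ) : (2 * k + 1) ^ 2 / 4 = k * k + k := by
  rw [show (2 * k + 1) ^ 2 = 4 * (k * k + k) + 1 by ring]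
  omega

lemma arith_step (n : ℕ) (h : 1 ≤ n) : (n - 1) ^ 2 / 4 + n / 2 ≤ n ^ 2 / 4 := by
  obtain ⟨k, rfl | rfl⟩ := Nat.even_or_odd' n
  · rcases k with _ | j
    · omega
    · have h1 : 2 * (j + 1) - 1 = 2 * j + 1 := by omega
      rw [h1, sq_div_four_odd, sq_div_four_even]
      have h2 : 2 * (j + 1) / 2 = j + 1 := by omega
      rw [h2]
      nlinarith
  · have h1 : 2 * k + 1 - 1 = 2 * k := by omega
    rw [h1, sq_div_four_even, sq_div_four_odd]
    omega

lemma upper_bound : ∀ (n : ℕ) (V : Type) (_ : Fintype V) (_ : DecidableEq V)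
    (G : SimpleGraph V) (_ : DecidableRel G.Adj), Fintype.card V = n → 5 ≤ n →
    ¬ (dumbbell 3 3 0).ContainsCopy G → G.edgeFinset.card ≤ n ^ 2 / 4 + 1 := by
  intro n
  induction n using Nat.strong_induction_on with
  | _ n ih =>
    intro V _ _ G _ hcard h5 hfree
    by_cases hdeg : ∀ v : V, Fintype.card V / 2 + 1 ≤ G.degree v
    · exact absurd (bowtie_of_minDeg G (by omega) hdeg) hfree
    push_neg at hdeg
    obtain ⟨v, hv⟩ := hdeg
    by_cases h6 : n = 5
    · subst h6
      by_contra hcon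
      push_neg at hcon
      have : (8 : ℕ) ≤ G.edgeFinset.card := by norm_num at hcon ⊢; omega
      exact hfree (base5 G hcard this)
    · have hcard' : Fintype.card ↥{w : V | w ≠ v} = n - 1 := by
        have h7 : Fintype.card {w : V // ¬ w = v} =
            Fintype.card V - Fintype.card {w : V // w = v} := Fintype.card_subtype_compl _
        rw [Fintype.card_subtype_eq] at h7
        rw [hcard] at h7
        exact h7
      have hfree' : ¬ (dumbbell 3 3 0).ContainsCopy (G.induce {w : V | w ≠ v}) :=
        fun h => hfree (contains_induce h)
      have hih := ih (n - 1) (by omega) ↥{w : V | w ≠ v} inferInstance inferInstance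
        (G.induce {w : V | w ≠ v}) inferInstance hcard' (by omega) hfree'
      have hdel := card_edge_delete G v
      have harith := arith_step n (by omega)
      rw [hcard] at hv
      generalize hA : (n - 1) ^ 2 / 4 = A at hih harith
      generalize hB : n ^ 2 / 4 = B at harith ⊢
      omega


def G0 (n : ℕ) : SimpleGraph (Fin n) :=
  SimpleGraph.fromRel fun i j =>
    (((i : ℕ) < n / 2) ↔ ¬ ((j : ℕ) < n / 2)) ∨ ((i : ℕ) = 0 ∧ (j : ℕ) = 1)

instance (n : ℕ) : DecidableRel (G0 n).Adj :=
  fun i j => decidable_of_iff _ (SimpleGraph.fromRel_adj _ i j).symm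
instance (r₁ r₂ q : ℕ) : DecidableRel (dumbbell r₁ r₂ q).Adj :=
  fun i j => decidable_of_iff _ (SimpleGraph.fromRel_adj _ i j).symm

lemma G0_free (n : ℕ) (hn : 5 ≤ n) : ¬ (dumbbell 3 3 0).ContainsCopy (G0 n) := by
  rintro ⟨f, hinj, hadj⟩
  have hk2 : 2 ≤ n / 2 := by omega
  have hA : ∀ i j : Fin n, (G0 n).Adj i j →
      (((i : ℕ) < n / 2) ↔ ¬ ((j : ℕ) < n / 2)) ∨
        (((i : ℕ) = 0 ∧ (j : ℕ) = 1) ∨ ((j : ℕ) = 0 ∧ (i : ℕ) = 1)) := by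
    intro i j h
    rw [G0, SimpleGraph.fromRel_adj] at h
    rcases h.2 with (hc | hs) | (hc | hs)
    · exact Or.inl hc
    · exact Or.inr (Or.inl hs)
    · exact Or.inl (by tauto)
    · exact Or.inr (Or.inr hs)
  have tri : ∀ p q r : Fin n, (G0 n).Adj p q → (G0 n).Adj p r → (G0 n).Adj q r →
      ((p : ℕ) = 0 ∨ (q : ℕ) = 0 ∨ (r : ℕ) = 0) ∧
        ((p : ℕ) = 1 ∨ (q : ℕ) = 1 ∨ (r : ℕ) = 1) := by
    intro p q r h1 h2 h3
    have a1 := hA _ _ h1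
    have a2 := hA _ _ h2
    have a3 := hA _ _ h3
    tauto
  have e01 : (dumbbell 3 3 0).Adj 0 1 := by decide
  have e02 : (dumbbell 3 3 0).Adj 0 2 := by decide
  have e12 : (dumbbell 3 3 0).Adj 1 2 := by decide
  have e23 : (dumbbell 3 3 0).Adj 2 3 := by decide
  have e24 : (dumbbell 3 3 0).Adj 2 4 := by decide
  have e34 : (dumbbell 3 3 0).Adj 3 4 := by decide
  obtain ⟨hz1, ho1⟩ := tri (f 0) (f 1) (f 2) (hadj e01) (hadj e02) (hadj e12)
  obtain ⟨hz2, ho2⟩ := tri (f 2) (f 3) (f 4) (hadj e23) (hadj e24) (hadj e34)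
  have key : ∀ i j : Fin 5, i ≠ j → ((f i : ℕ) = (f j : ℕ)) → False :=
    fun i j hij h => hij (hinj (Fin.val_injective h))
  have h0 : ((f 2 : Fin n) : ℕ) = 0 := by
    rcases hz1 with h | h | h <;> rcases hz2 with h' | h' | h' <;>
      first
        | exact h
        | exact h'
        | exact ((key _ _ (by decide) (h.trans h'.symm)).elim)
  have h1 : ((f 2 : Fin n) : ℕ) = 1 := by
    rcases ho1 with h | h | h <;> rcases ho2 with h' | h' | h' <;>
      first
        | exact h
        | exact h'
        | exact ((key _ _ (by decide) (h.trans h'.symm)).elim)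
  omega

lemma count_lt (n m : ℕ) (h : m ≤ n) :
    ((Finset.univ : Finset (Fin n)).filter (fun j : Fin n => (j : ℕ) < m)).card = m := by
  have himg : (((Finset.univ : Finset (Fin n)).filter (fun j : Fin n => (j : ℕ) < m)).image Fin.val)
      = Finset.range m := by
    ext a
    simp only [Finset.mem_image, Finset.mem_filter, Finset.mem_univ, true_and,
      Finset.mem_range]
    constructor
    · rintro ⟨j, hj, rfl⟩; exact hj
    · intro ha; exact ⟨⟨a, lt_of_lt_of_le ha h⟩, ha, rfl⟩
  have h2 := congrArg Finset.card himg
  rw [Finset.card_image_of_injective _ Fin.val_injective, Finset.card_range] at h2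
  exact h2

lemma G0_card (n : ℕ) (hn : 5 ≤ n) : (G0 n).edgeFinset.card = n ^ 2 / 4 + 1 := by
  have hk2 : 2 ≤ n / 2 := by omega
  have hkn : n / 2 ≤ n := by omega
  set k := n / 2 with hk
  have hdeg : ∀ i : Fin n, (G0 n).degree i =
      (if (i : ℕ) < k then n - k else k) + (if (i : ℕ) < 2 then 1 else 0) := by
    intro i
    rw [← card_neighborFinset_eq_degree]
    by_cases h2 : (i : ℕ) < 2
    · have hor : (i : ℕ) = 0 ∨ (i : ℕ) = 1 := by omega
      rcases hor with h0 | h1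
      · have hset : (G0 n).neighborFinset i =
            insert (⟨1, by omega⟩ : Fin n)
              ((Finset.univ : Finset (Fin n)).filter (fun j : Fin n => ¬ (j : ℕ) < k)) := by
          ext j
          rw [mem_neighborFinset]
          simp only [mem_neighborFinset, Finset.mem_insert, Finset.mem_filter,
            Finset.mem_univ, true_and, G0, SimpleGraph.fromRel_adj, ne_eq, Fin.ext_iff, Fin.val_mk]
          omega
        rw [hset, Finset.card_insert_of_notMem (by
          simp only [Finset.mem_filter, Finset.mem_univ, true_and, not_not, Fin.val_mk]
          omega)]
        have hc := Finset.card_filter_add_card_filter_not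
          (s := (Finset.univ : Finset (Fin n))) (p := fun j : Fin n => (j : ℕ) < k)
        rw [count_lt n k hkn, Finset.card_univ, Fintype.card_fin] at hc
        simp only [h0, if_pos (by omega : (0:ℕ) < k), if_pos (by omega : (0:ℕ) < 2)]
        omega
      · have hset : (G0 n).neighborFinset i =
            insert (⟨0, by omega⟩ : Fin n)
              ((Finset.univ : Finset (Fin n)).filter (fun j : Fin n => ¬ (j : ℕ) < k)) := by
          ext j
          rw [mem_neighborFinset]
          simp only [mem_neighborFinset, Finset.mem_insert, Finset.mem_filter,
            Finset.mem_univ, true_and, G0, SimpleGraph.fromRel_adj, ne_eq, Fin.ext_iff, Fin.val_mk]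
          omega
        rw [hset, Finset.card_insert_of_notMem (by
          simp only [Finset.mem_filter, Finset.mem_univ, true_and, not_not, Fin.val_mk]
          omega)]
        have hc := Finset.card_filter_add_card_filter_not
          (s := (Finset.univ : Finset (Fin n))) (p := fun j : Fin n => (j : ℕ) < k)
        rw [count_lt n k hkn, Finset.card_univ, Fintype.card_fin] at hc
        simp only [h1, if_pos (by omega : (1:ℕ) < k), if_pos (by omega : (1:ℕ) < 2)]
        omega
    · by_cases hP : (i : ℕ) < k
      · have hset : (G0 n).neighborFinset i =
            (Finset.univ : Finset (Fin n)).filter (fun j : Fin n => ¬ (j : ℕ) < k) := by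
          ext j
          rw [mem_neighborFinset]
          simp only [mem_neighborFinset, Finset.mem_filter,
            Finset.mem_univ, true_and, G0, SimpleGraph.fromRel_adj, ne_eq, Fin.ext_iff, Fin.val_mk]
          omega
        rw [hset]
        have hc := Finset.card_filter_add_card_filter_not
          (s := (Finset.univ : Finset (Fin n))) (p := fun j : Fin n => (j : ℕ) < k)
        rw [count_lt n k hkn, Finset.card_univ, Fintype.card_fin] at hc
        rw [if_pos hP, if_neg h2]
        omega
      · have hset : (G0 n).neighborFinset i =
            (Finset.univ : Finset (Fin n)).filter (fun j : Fin n => (j : ℕ) < k) := by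
          ext j
          rw [mem_neighborFinset]
          simp only [mem_neighborFinset, Finset.mem_filter,
            Finset.mem_univ, true_and, G0, SimpleGraph.fromRel_adj, ne_eq, Fin.ext_iff, Fin.val_mk]
          omega
        rw [hset, count_lt n k hkn, if_neg hP, if_neg h2]
        omega
  have hsum := (G0 n).sum_degrees_eq_twice_card_edges
  rw [Finset.sum_congr rfl (fun i _ => hdeg i)] at hsum
  rw [Finset.sum_add_distrib] at hsum
  rw [Finset.sum_ite, Finset.sum_const, Finset.sum_const, Finset.sum_ite,
    Finset.sum_const, Finset.sum_const] at hsum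
  rw [count_lt n k hkn, count_lt n 2 (by omega)] at hsum
  have hc := Finset.card_filter_add_card_filter_not
    (s := (Finset.univ : Finset (Fin n))) (p := fun j : Fin n => (j : ℕ) < k)
  rw [count_lt n k hkn, Finset.card_univ, Fintype.card_fin] at hc
  simp only [smul_eq_mul] at hsum
  have hcard : (G0 n).edgeFinset.card = k * (n - k) + 1 := by
    have hx : ((Finset.univ : Finset (Fin n)).filter (fun j : Fin n => ¬ (j : ℕ) < k)).card = n - k := by
      omega
    rw [hx] at hsum
    have hcomm : (n - k) * k = k * (n - k) := Nat.mul_comm _ _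
    have h2c : ((Finset.univ : Finset (Fin n)).filter (fun j : Fin n => ¬ (j : ℕ) < 2)).card
        = n - 2 := by
      have hc2 := Finset.card_filter_add_card_filter_not
        (s := (Finset.univ : Finset (Fin n))) (p := fun j : Fin n => (j : ℕ) < 2)
      rw [count_lt n 2 (by omega), Finset.card_univ, Fintype.card_fin] at hc2
      omega
    rw [h2c, hcomm] at hsum
    omega
  rw [hcard]
  obtain ⟨m, hm | hm⟩ := Nat.even_or_odd' n <;> subst hm
  · rw [sq_div_four_even]
    have h1 : k = m := by omega
    have h2 : 2 * m - k = m := by omega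
    rw [h1] at h2 ⊢
    rw [h2]
  · rw [sq_div_four_odd]
    have h1 : k = m := by omega
    have h2 : 2 * m + 1 - k = m + 1 := by omega
    rw [h1] at h2 ⊢
    rw [h2, Nat.mul_add, Nat.mul_one]


end Aux

theorem statement2 (n : ℕ) (hn : 5 ≤ n) :
    exNum n (dumbbell 3 3 0) = n ^ 2 / 4 + 1 := by
  rw [exNum]
  have hub : ∀ m ∈ {m : ℕ | ∃ G : SimpleGraph (Fin n),
      ¬ (dumbbell 3 3 0).ContainsCopy G ∧ G.edgeSet.ncard = m}, m ≤ n ^ 2 / 4 + 1 := by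
    rintro m ⟨G, hfree, rfl⟩
    letI : DecidableRel G.Adj := Classical.decRel _
    rw [← SimpleGraph.coe_edgeFinset, Set.ncard_coe_finset]
    exact upper_bound n (Fin n) inferInstance inferInstance G inferInstance
      (Fintype.card_fin n) hn hfree
  have hmem : n ^ 2 / 4 + 1 ∈ {m : ℕ | ∃ G : SimpleGraph (Fin n),
      ¬ (dumbbell 3 3 0).ContainsCopy G ∧ G.edgeSet.ncard = m} := by
    refine ⟨G0 n, G0_free n hn, ?_⟩
    rw [← SimpleGraph.coe_edgeFinset, Set.ncard_coe_finset]
    exact G0_card n hn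
  exact le_antisymm (csSup_le ⟨_, hmem⟩ hub) (le_csSup ⟨_, hub⟩ hmem)
end

section
/- Let t, k, n be integers with t ≥ 2, k ≥ 0, and n ≥ ⌊(t+1)²/4⌋. If G is a simple graph on n vertices with at least ⌊n²/4⌋ + k edges, then there exists an induced subgraph G' of G on n' ≥ t vertices such that G' has at least ⌊n'²/4⌋ + k edges and minimum degree δ(G') ≥ ⌊n'/2⌋. -/
open SimpleGraph

section Aux
section Aux

variable {V : Type*} [Fintype V]

noncomputable def EE (G : SimpleGraph V) (S : Finset V) : ℕ :=
  {e ∈ G.edgeSet | ∀ v ∈ e, v ∈ S}.ncard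

noncomputable def DD (G : SimpleGraph V) (S : Finset V) (v : V) : ℕ :=
  {u | u ∈ S ∧ G.Adj v u}.ncard

lemma EE_univ (G : SimpleGraph V) : EE G Finset.univ = G.edgeSet.ncard := by
  simp [EE]

lemma EE_erase [DecidableEq V] (G : SimpleGraph V) {S : Finset V} {v : V} (hv : v ∈ S) :
    EE G S = EE G (S.erase v) + DD G S v := by
  classical
  set A := {e ∈ G.edgeSet | ∀ u ∈ e, u ∈ S.erase v} with hA
  set B := {e ∈ G.edgeSet | (∀ u ∈ e, u ∈ S) ∧ v ∈ e} with hBdef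
  have hU : {e ∈ G.edgeSet | ∀ u ∈ e, u ∈ S} = A ∪ B := by
    ext e
    simp only [hA, hBdef, Set.mem_setOf_eq, Set.mem_union]
    constructor
    · rintro ⟨he, hs⟩
      by_cases hve : v ∈ e
      · exact Or.inr ⟨he, hs, hve⟩
      · exact Or.inl ⟨he, fun u hu => Finset.mem_erase.2 ⟨fun h => hve (h ▸ hu), hs u hu⟩⟩
    · rintro (⟨he, hs⟩ | ⟨he, hs, _⟩)
      · exact ⟨he, fun u hu => (Finset.mem_erase.1 (hs u hu)).2⟩
      · exact ⟨he, hs⟩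
  have hdisj : Disjoint A B := by
    rw [Set.disjoint_left]
    rintro e ⟨_, hs⟩ ⟨_, _, hve⟩
    exact absurd rfl (Finset.mem_erase.1 (hs v hve)).1
  have hB : B = (fun u => s(v, u)) '' {u | u ∈ S ∧ G.Adj v u} := by
    ext e
    induction e using Sym2.ind with
    | _ x y =>
      constructor
      · rintro ⟨he, hs, hve⟩
        rcases Sym2.mem_iff.1 hve with rfl | rfl
        · exact ⟨y, ⟨hs y (Sym2.mem_mk_right _ _), G.mem_edgeSet.mp he⟩, rfl⟩
        · exact ⟨x, ⟨hs x (Sym2.mem_mk_left _ _), ((G.mem_edgeSet.mp he)).symm⟩,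
            (Sym2.eq_swap)⟩
      · rintro ⟨u, ⟨huS, hadj⟩, heq⟩
        refine ⟨?_, ?_, ?_⟩
        · rw [← heq]; exact G.mem_edgeSet.mpr hadj
        · intro w hw
          rw [← heq] at hw
          rcases Sym2.mem_iff.1 hw with rfl | rfl
          · exact hv
          · exact huS
        · rw [← heq]; exact Sym2.mem_mk_left _ _
  have hinj : Function.Injective (fun u => s(v, u)) := fun a b h => Sym2.congr_right.1 h
  have hcard : B.ncard = DD G S v := by
    rw [hB, Set.ncard_image_of_injective _ hinj]; rfl
  rw [EE, hU, Set.ncard_union_eq hdisj (Set.toFinite A) (Set.toFinite B), hcard]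
  rfl

lemma DD_le [DecidableEq V] (G : SimpleGraph V) (S : Finset V) (v : V) :
    DD G S v ≤ (S.erase v).card := by
  rw [DD, ← Set.ncard_coe_finset]
  apply Set.ncard_le_ncard _ (Set.toFinite _)
  rintro u ⟨huS, hadj⟩
  simp [Finset.mem_erase, huS, hadj.ne']

lemma EE_le (G : SimpleGraph V) : ∀ n (S : Finset V), S.card ≤ n →
    EE G S ≤ S.card * (S.card - 1) / 2 := by
  classical
  intro n
  induction n with
  | zero =>
    intro S hS
    have hSe : S = ∅ := Finset.card_eq_zero.1 (Nat.le_zero.1 hS)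
    subst hSe
    have : {e ∈ G.edgeSet | ∀ v ∈ e, v ∈ (∅ : Finset V)} = ∅ := by
      ext e
      induction e using Sym2.ind with
      | _ x y =>
        simp only [Set.mem_setOf_eq, Set.mem_empty_iff_false, iff_false, not_and]
        intro he h
        exact absurd (h x (Sym2.mem_mk_left _ _)) (Finset.notMem_empty x)
    rw [EE, this, Set.ncard_empty]
    exact Nat.zero_le _
  | succ n ih =>
    intro S hS
    rcases S.eq_empty_or_nonempty with rfl | ⟨v, hv⟩
    · simpa using ih ∅ (by simp)
    · have hrec := ih (S.erase v) (by
        have := Finset.card_erase_of_mem hv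
        omega)
      have hcarde : (S.erase v).card = S.card - 1 := Finset.card_erase_of_mem hv
      have hdd := DD_le G S v
      have heq := EE_erase G hv
      have hpos : 1 ≤ S.card := Finset.card_pos.2 ⟨v, hv⟩
      set s := S.card with hs
      rw [hcarde] at hrec hdd
      have h2 : 2 ∣ (s - 1) * (s - 1 - 1) := by
        rcases Nat.even_or_odd (s - 1) with h | h
        · exact Dvd.dvd.mul_right h.two_dvd _
        · rcases h with ⟨m, hm⟩
          exact Dvd.dvd.mul_left (by omega : 2 ∣ (s - 1 - 1)) _
      have h3 : 2 ∣ s * (s - 1) := by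
        rcases Nat.even_or_odd s with h | h
        · exact Dvd.dvd.mul_right h.two_dvd _
        · rcases h with ⟨m, hm⟩
          exact Dvd.dvd.mul_left (by omega : 2 ∣ (s - 1)) _
      have hprodgen : ∀ m : ℕ, (m + 1) * m = m * (m - 1) + 2 * m := by
        intro m
        cases m with
        | zero => rfl
        | succ m => simp [Nat.succ_sub_one]; ring
      have hprod : s * (s - 1) = (s - 1) * (s - 1 - 1) + 2 * (s - 1) := by
        have h := hprodgen (s - 1)
        have hs1 : s - 1 + 1 = s := by omega
        rw [hs1] at h
        exact h
      omega

lemma sq_div4 (n : ℕ) (h : 1 ≤ n) : (n - 1) ^ 2 / 4 + n / 2 = n ^ 2 / 4 := by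
  obtain ⟨m, rfl⟩ := Nat.exists_eq_add_of_le h
  rcases Nat.even_or_odd m with ⟨p, rfl⟩ | ⟨p, rfl⟩
  · have h1 : (1 + (p + p)) ^ 2 = 4 * (p ^ 2 + p) + 1 := by ring
    have h2 : (1 + (p + p) - 1) ^ 2 = 4 * p ^ 2 := by
      simp only [Nat.add_sub_cancel_left]; ring
    omega
  · have h1 : (1 + (2 * p + 1)) ^ 2 = 4 * (p ^ 2 + 2 * p + 1) := by ring
    have h2 : (1 + (2 * p + 1) - 1) ^ 2 = 4 * (p ^ 2 + p) + 1 := by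
      simp only [Nat.add_sub_cancel_left]; ring
    omega

lemma key (G : SimpleGraph V) : ∀ n (S : Finset V), S.card = n → ∀ j : ℕ,
    n ^ 2 / 4 + j ≤ EE G S →
    ∃ T : Finset V, T ⊆ S ∧ T.card ^ 2 / 4 + j + (n - T.card) ≤ EE G T ∧
      ∀ v ∈ T, T.card / 2 ≤ DD G T v := by
  classical
  intro n
  induction n using Nat.strong_induction_on with
  | _ n ih =>
    intro S hcard j hEE
    by_cases hdeg : ∀ v ∈ S, S.card / 2 ≤ DD G S v
    · exact ⟨S, Finset.Subset.refl S, by simpa [hcard] using hEE, hdeg⟩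
    · push_neg at hdeg
      obtain ⟨v, hv, hlt⟩ := hdeg
      have hn2 : 2 ≤ n := by
        by_contra h
        push_neg at h
        interval_cases n <;> simp_all
      have hcarde : (S.erase v).card = n - 1 := by
        rw [Finset.card_erase_of_mem hv, hcard]
      have heq := EE_erase G hv
      have hsq : (n - 1) ^ 2 / 4 + n / 2 = n ^ 2 / 4 := sq_div4 n (by omega)
      have hEE' : (n - 1) ^ 2 / 4 + (j + 1) ≤ EE G (S.erase v) := by
        rw [hcard] at hlt
        omega
      obtain ⟨T, hTsub, hTE, hTdeg⟩ := ih (n - 1) (by omega) (S.erase v) hcarde (j + 1) hEE'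
      refine ⟨T, hTsub.trans (Finset.erase_subset v S), ?_, hTdeg⟩
      have hTcard : T.card ≤ n - 1 := hcarde ▸ Finset.card_le_card hTsub
      omega

lemma EE_induce (G : SimpleGraph V) (T : Finset V) :
    (G.induce (T : Set V)).edgeSet.ncard = EE G T := by
  rw [EE, ← Set.ncard_image_of_injective _ (Sym2.map.injective Subtype.val_injective)]
  congr 1
  ext e
  induction e using Sym2.ind with
  | _ x y =>
    simp only [Set.mem_image, Set.mem_setOf_eq]
    constructor
    · rintro ⟨e', he', heq⟩
      induction e' using Sym2.ind with
      | _ a b =>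
        simp only [Sym2.map_pair_eq] at heq
        rw [← heq]
        have hab : G.Adj a b := by simpa using he'
        refine ⟨by simpa using hab, ?_⟩
        intro w hw
        rcases Sym2.mem_iff.1 hw with rfl | rfl
        · exact a.2
        · exact b.2
    · rintro ⟨he, hmem⟩
      have hx : x ∈ T := hmem x (Sym2.mem_mk_left _ _)
      have hy : y ∈ T := hmem y (Sym2.mem_mk_right _ _)
      refine ⟨s(⟨x, hx⟩, ⟨y, hy⟩), ?_, by simp⟩
      simpa using G.mem_edgeSet.mp he

lemma neighbor_induce (G : SimpleGraph V) (T : Finset V) (v : (T : Set V)) :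
    ((G.induce (T : Set V)).neighborSet v).ncard = DD G T (v : V) := by
  rw [DD, ← Set.ncard_image_of_injective _ (Subtype.val_injective)]
  congr 1
  ext u
  simp only [Set.mem_image, SimpleGraph.mem_neighborSet, Set.mem_setOf_eq]
  constructor
  · rintro ⟨w, hadj, rfl⟩
    exact ⟨w.2, by simpa using hadj⟩
  · rintro ⟨huT, hadj⟩
    exact ⟨⟨u, huT⟩, by simpa using hadj, rfl⟩

end Aux
theorem statement6 {V : Type*} [Fintype V] (t k : ℕ) (ht : 2 ≤ t)
    (hn : (t + 1) ^ 2 / 4 ≤ Fintype.card V) (G : SimpleGraph V)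
    (hE : Fintype.card V ^ 2 / 4 + k ≤ G.edgeSet.ncard) :
    ∃ S : Finset V, t ≤ S.card ∧
      S.card ^ 2 / 4 + k ≤ (G.induce (S : Set V)).edgeSet.ncard ∧
      ∀ v : (S : Set V), S.card / 2 ≤ ((G.induce (S : Set V)).neighborSet v).ncard := by
  classical
  obtain ⟨T, hTsub, hTE, hTdeg⟩ := key G (Fintype.card V) Finset.univ Finset.card_univ k
    (by rw [EE_univ]; exact hE)
  set N := Fintype.card V with hN
  set s := T.card with hs
  have hbound : EE G T ≤ s * (s - 1) / 2 := EE_le G s T le_rfl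
  have hEE2 : s ^ 2 / 4 + k + (N - s) ≤ s * (s - 1) / 2 := le_trans hTE hbound
  have hts : t ≤ s := by
    by_contra hst
    push_neg at hst
    have hxle : s ^ 2 ≤ (t - 1) ^ 2 := Nat.pow_le_pow_left (by omega) 2
    have hpt : (t + 1) ^ 2 = (t - 1) ^ 2 + 4 * t := by
      obtain ⟨u, rfl⟩ : ∃ u, t = u + 2 := ⟨t - 2, by omega⟩
      have h1 : (u + 3) ^ 2 = (u + 1) ^ 2 + 4 * (u + 2) := by ring
      simpa using h1
    have hA : s * (s - 1) + s = s ^ 2 := by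
      cases s with
      | zero => rfl
      | succ m =>
        have h1 : (m + 1) * m + (m + 1) = (m + 1) ^ 2 := by ring
        simpa [Nat.succ_sub_one] using h1
    have hev : 2 ∣ s * (s - 1) := by
      rcases Nat.even_or_odd s with h | h
      · exact Dvd.dvd.mul_right h.two_dvd _
      · rcases h with ⟨m, hm⟩
        exact Dvd.dvd.mul_left (by omega : 2 ∣ (s - 1)) _
    have hmodx : s ^ 2 % 4 = 0 ∨ s ^ 2 % 4 = 1 := by
      rcases Nat.even_or_odd s with ⟨p, hp⟩ | ⟨p, hp⟩
      · have h1 : s ^ 2 = 4 * p ^ 2 := by rw [hp]; ring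
        omega
      · have h1 : s ^ 2 = 4 * (p ^ 2 + p) + 1 := by rw [hp]; ring
        omega
    omega
  refine ⟨T, hts, ?_, ?_⟩
  · rw [EE_induce, ← hs]
    omega
  · intro v
    rw [neighbor_induce]
    exact hTdeg (v : V) (Finset.mem_coe.mp v.2)
end Aux
end

section
/- Let q ≥ 2 and k ≥ 3 be fixed integers, and let G be a simple graph on n ≥ 4k + 4q − 4 vertices with minimum degree δ(G) ≥ ⌊n/2⌋. If G contains a subgraph isomorphic to D_b(3,k;1), then for every integer i with 2 ≤ i ≤ q, G contains a subgraph isomorphic to D_b(3,k;i). -/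
open SimpleGraph

/-- A ℕ-indexed copy of the dumbbell `D_b(3,k;ℓ)` in `G`. -/
def NCopy {V : Type*} (G : SimpleGraph V) (k ℓ : ℕ) (g : ℕ → V) : Prop :=
  (∀ a, a < k + ℓ + 2 → ∀ b, b < k + ℓ + 2 → g a = g b → a = b) ∧
  (∀ j, j + 1 < k + ℓ + 2 → G.Adj (g j) (g (j + 1))) ∧
  G.Adj (g 0) (g 2) ∧ G.Adj (g (ℓ + 2)) (g (k + ℓ + 1))

lemma ncopy_contains {V : Type*} {G : SimpleGraph V} {k ℓ : ℕ} {g : ℕ → V}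
    (hg : NCopy G k ℓ g) : (dumbbell 3 k ℓ).ContainsCopy G := by
  obtain ⟨hinj, hadj, hc1, hc2⟩ := hg
  refine ⟨fun a => g a.val, ?_, ?_⟩
  · intro a b hab
    have ha := a.isLt
    have hb := b.isLt
    exact Fin.ext (hinj a.val (by omega) b.val (by omega) hab)
  · intro a b hab
    have ha := a.isLt
    have hb := b.isLt
    dsimp only
    rw [dumbbell, SimpleGraph.fromRel_adj] at hab
    obtain ⟨-, h | h⟩ := hab
    · rcases h with h | ⟨h1, h2⟩ | ⟨h1, h2⟩
      · have := hadj a.val (by omega)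
        rwa [h] at this
      · rw [h1, show (b:ℕ) = 2 by omega]
        exact hc1
      · rw [show (a:ℕ) = ℓ+2 by omega, show (b:ℕ) = k+ℓ+1 by omega]
        exact hc2
    · rcases h with h | ⟨h1, h2⟩ | ⟨h1, h2⟩
      · have := hadj b.val (by omega)
        rw [h] at this
        exact this.symm
      · rw [h1, show (a:ℕ) = 2 by omega]
        exact hc1.symm
      · rw [show (b:ℕ) = ℓ+2 by omega, show (a:ℕ) = k+ℓ+1 by omega]
        exact hc2.symm

lemma contains_ncopy {V : Type*} {G : SimpleGraph V} {k ℓ : ℕ} (hk : 3 ≤ k)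
    (hcc : (dumbbell 3 k ℓ).ContainsCopy G) : ∃ g : ℕ → V, NCopy G k ℓ g := by
  obtain ⟨f, hfi, hfa⟩ := hcc
  have hpos : 0 < 3 + k + ℓ - 1 := by omega
  refine ⟨fun j => if h : j < k + ℓ + 2 then f ⟨j, by omega⟩ else f ⟨0, hpos⟩, ?_, ?_, ?_, ?_⟩
  · intro a ha b hb hab
    dsimp only at hab
    rw [dif_pos ha, dif_pos hb] at hab
    have := hfi hab
    exact congrArg Fin.val this
  · intro j hj
    dsimp only
    rw [dif_pos (by omega : j < k + ℓ + 2), dif_pos hj]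
    apply hfa
    rw [dumbbell, SimpleGraph.fromRel_adj]
    refine ⟨?_, Or.inl (Or.inl (show j + 1 = j + 1 from rfl))⟩
    simp only [ne_eq, Fin.mk.injEq]
    omega
  · dsimp only
    rw [dif_pos (by omega : (0:ℕ) < k + ℓ + 2), dif_pos (by omega : (2:ℕ) < k + ℓ + 2)]
    apply hfa
    rw [dumbbell, SimpleGraph.fromRel_adj]
    refine ⟨?_, Or.inl (Or.inr (Or.inl ⟨show (0:ℕ) = 0 from rfl, show (2:ℕ) = 3 - 1 by omega⟩))⟩
    simp only [ne_eq, Fin.mk.injEq]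
    omega
  · dsimp only
    rw [dif_pos (by omega : ℓ + 2 < k + ℓ + 2), dif_pos (by omega : k + ℓ + 1 < k + ℓ + 2)]
    apply hfa
    rw [dumbbell, SimpleGraph.fromRel_adj]
    refine ⟨?_, Or.inl (Or.inr (Or.inr ⟨show ℓ + 2 = 3 + ℓ - 1 by omega,
      show k + ℓ + 1 = 3 + k + ℓ - 2 by omega⟩))⟩
    simp only [ne_eq, Fin.mk.injEq]
    omega

lemma ncopy_swap {V : Type*} {G : SimpleGraph V} {k ℓ : ℕ} {g : ℕ → V} (hl : 1 ≤ ℓ)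
    (hg : NCopy G k ℓ g) :
    NCopy G k ℓ (fun j => g (match j with | 0 => 1 | 1 => 0 | n => n)) := by
  obtain ⟨hinj, hadj, hc1, hc2⟩ := hg
  refine ⟨?_, ?_, ?_, ?_⟩
  · intro a ha b hb hab
    dsimp only at hab
    match a, b with
    | 0, 0 => rfl
    | 0, 1 => have := hinj 1 (by omega) 0 (by omega) hab; omega
    | 0, (b+2) => have := hinj 1 (by omega) (b+2) (by omega) hab; omega
    | 1, 0 => have := hinj 0 (by omega) 1 (by omega) hab; omega
    | 1, 1 => rfl
    | 1, (b+2) => have := hinj 0 (by omega) (b+2) (by omega) hab; omega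
    | (a+2), 0 => have := hinj (a+2) (by omega) 1 (by omega) hab; omega
    | (a+2), 1 => have := hinj (a+2) (by omega) 0 (by omega) hab; omega
    | (a+2), (b+2) => exact hinj (a+2) (by omega) (b+2) (by omega) hab
  · intro j hj
    match j with
    | 0 => exact (hadj 0 (by omega)).symm
    | 1 => exact hc1
    | (j+2) => exact hadj (j+2) (by omega)
  · exact hadj 1 (by omega)
  · dsimp only
    have e : (match ℓ + 2 with | 0 => 1 | 1 => 0 | n => n) = ℓ + 2 := rfl
    have e2 : (match k + ℓ + 1 with | 0 => 1 | 1 => 0 | n => n) = k + ℓ + 1 := by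
      match h : k + ℓ + 1 with
      | 0 => omega
      | 1 => omega
      | (n+2) => rfl
    rw [e, e2]
    exact hc2

lemma buildShift {V : Type*} {G : SimpleGraph V} {k ℓ : ℕ} {g L : ℕ → V} (c : ℕ)
    (hc3 : 3 ≤ c) (hcl : c ≤ ℓ + 3) (hk : 1 ≤ k)
    (hg : NCopy G k ℓ g)
    (hLadj : ∀ j, j + 1 < c → G.Adj (L j) (L (j + 1)))
    (hL02 : G.Adj (L 0) (L 2))
    (hjoin : G.Adj (L (c - 1)) (g (c - 1)))
    (hLinj : ∀ a, a < c → ∀ b, b < c → L a = L b → a = b)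
    (hLg : ∀ a, a < c → ∀ r, c ≤ r + 1 → r < k + ℓ + 2 → L a ≠ g r) :
    NCopy G k (ℓ + 1) (fun j => if j < c then L j else g (j - 1)) := by
  obtain ⟨hinj, hadj, hch1, hch2⟩ := hg
  refine ⟨?_, ?_, ?_, ?_⟩
  · intro a ha b hb hab
    dsimp only at hab
    split_ifs at hab with h1 h2 h2
    · exact hLinj a h1 b h2 hab
    · exact absurd hab (hLg a h1 (b - 1) (by omega) (by omega))
    · exact absurd hab.symm (hLg b h2 (a - 1) (by omega) (by omega))
    · have := hinj (a - 1) (by omega) (b - 1) (by omega) hab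
      omega
  · intro j hj
    dsimp only
    split_ifs with h1 h2 h2
    · exact hLadj j h2
    · have hjc : j = c - 1 := by omega
      have hjc2 : j + 1 - 1 = c - 1 := by omega
      rw [show j + 1 - 1 = c - 1 from hjc2, show j = c - 1 from hjc]
      exact hjoin
    · omega
    · have h4 : j + 1 - 1 = j - 1 + 1 := by omega
      rw [h4]
      exact hadj (j - 1) (by omega)
  · dsimp only
    rw [if_pos (by omega : (0:ℕ) < c), if_pos (by omega : (2:ℕ) < c)]
    exact hL02
  · dsimp only
    rw [if_neg (by omega), if_neg (by omega)]
    have e1 : ℓ + 1 + 2 - 1 = ℓ + 2 := by omega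
    have e2 : k + (ℓ + 1) + 1 - 1 = k + ℓ + 1 := by omega
    rw [e1, e2]
    exact hch2

section cons
variable {V : Type*} {G : SimpleGraph V} {k ℓ : ℕ} {g : ℕ → V}

/-- x adjacent to u,v : triangle u,x,v; path v,w,p₁,…  -/
lemma conC1 {x : V} (hk : 3 ≤ k) (hl : 1 ≤ ℓ) (hg : NCopy G k ℓ g)
    (hxg : ∀ r, r < k + ℓ + 2 → x ≠ g r)
    (h0 : G.Adj x (g 0)) (h1 : G.Adj x (g 1)) :
    (dumbbell 3 k (ℓ + 1)).ContainsCopy G := by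
  obtain ⟨hinj, hadj, hch1, hch2⟩ := hg
  have hgne : ∀ a b : ℕ, a < k+ℓ+2 → b < k+ℓ+2 → a ≠ b → g a ≠ g b :=
    fun a b ha hb hne h => hne (hinj a ha b hb h)
  apply ncopy_contains
  refine buildShift (L := fun j => match j with | 0 => g 0 | 1 => x | _ => g 1) 3
    (by omega) (by omega) (by omega) ⟨hinj, hadj, hch1, hch2⟩ ?_ ?_ ?_ ?_ ?_
  · intro j hj
    have hj' : j ≤ 1 := by omega
    interval_cases j
    · exact h0.symm
    · exact h1
  · exact hadj 0 (by omega)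
  · exact hadj 1 (by omega)
  · intro a ha b hb hab
    interval_cases a <;> interval_cases b <;>
      first
        | rfl
        | exact absurd hab (hgne _ _ (by omega) (by omega) (by omega))
        | exact absurd hab.symm (hxg _ (by omega))
        | exact absurd hab (hxg _ (by omega))
  · intro a ha r hr1 hr2
    interval_cases a <;>
      first
        | exact hgne _ _ (by omega) (by omega) (by omega)
        | exact hxg _ (by omega)

/-- x adjacent to u,p₁ : triangle v,w,u; path u,x,p₁,… -/
lemma conC2 {x : V} (hk : 3 ≤ k) (hl : 1 ≤ ℓ) (hg : NCopy G k ℓ g)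
    (hxg : ∀ r, r < k + ℓ + 2 → x ≠ g r)
    (h0 : G.Adj x (g 0)) (h3 : G.Adj x (g 3)) :
    (dumbbell 3 k (ℓ + 1)).ContainsCopy G := by
  obtain ⟨hinj, hadj, hch1, hch2⟩ := hg
  have hgne : ∀ a b : ℕ, a < k+ℓ+2 → b < k+ℓ+2 → a ≠ b → g a ≠ g b :=
    fun a b ha hb hne h => hne (hinj a ha b hb h)
  apply ncopy_contains
  refine buildShift (L := fun j => match j with | 0 => g 1 | 1 => g 2 | 2 => g 0 | _ => x) 4
    (by omega) (by omega) (by omega) ⟨hinj, hadj, hch1, hch2⟩ ?_ ?_ ?_ ?_ ?_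
  · intro j hj
    have hj' : j ≤ 2 := by omega
    interval_cases j
    · exact hadj 1 (by omega)
    · exact hch1.symm
    · exact h0.symm
  · exact (hadj 0 (by omega)).symm
  · exact h3
  · intro a ha b hb hab
    interval_cases a <;> interval_cases b <;>
      first
        | rfl
        | exact absurd hab (hgne _ _ (by omega) (by omega) (by omega))
        | exact absurd hab.symm (hxg _ (by omega))
        | exact absurd hab (hxg _ (by omega))
  · intro a ha r hr1 hr2
    interval_cases a <;>
      first
        | exact hgne _ _ (by omega) (by omega) (by omega)
        | exact hxg _ (by omega)


/-- x adjacent to v,p₁ : triangle u,w,v; path v,x,p₁,… -/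
lemma conC3 {x : V} (hk : 3 ≤ k) (hl : 1 ≤ ℓ) (hg : NCopy G k ℓ g)
    (hxg : ∀ r, r < k + ℓ + 2 → x ≠ g r)
    (h1 : G.Adj x (g 1)) (h3 : G.Adj x (g 3)) :
    (dumbbell 3 k (ℓ + 1)).ContainsCopy G := by
  obtain ⟨hinj, hadj, hch1, hch2⟩ := hg
  have hgne : ∀ a b : ℕ, a < k+ℓ+2 → b < k+ℓ+2 → a ≠ b → g a ≠ g b :=
    fun a b ha hb hne h => hne (hinj a ha b hb h)
  apply ncopy_contains
  refine buildShift (L := fun j => match j with | 0 => g 0 | 1 => g 2 | 2 => g 1 | _ => x) 4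
    (by omega) (by omega) (by omega) ⟨hinj, hadj, hch1, hch2⟩ ?_ ?_ ?_ ?_ ?_
  · intro j hj
    have hj' : j ≤ 2 := by omega
    interval_cases j
    · exact hch1
    · exact (hadj 1 (by omega)).symm
    · exact h1.symm
  · exact hadj 0 (by omega)
  · exact h3
  · intro a ha b hb hab
    interval_cases a <;> interval_cases b <;>
      first
        | rfl
        | exact absurd hab (hgne _ _ (by omega) (by omega) (by omega))
        | exact absurd hab.symm (hxg _ (by omega))
        | exact absurd hab (hxg _ (by omega))
  · intro a ha r hr1 hr2
    interval_cases a <;>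
      first
        | exact hgne _ _ (by omega) (by omega) (by omega)
        | exact hxg _ (by omega)


/-- x adjacent to w,p₁ : insert x between w and p₁ -/
lemma conC4 {x : V} (hk : 3 ≤ k) (hl : 1 ≤ ℓ) (hg : NCopy G k ℓ g)
    (hxg : ∀ r, r < k + ℓ + 2 → x ≠ g r)
    (h2 : G.Adj x (g 2)) (h3 : G.Adj x (g 3)) :
    (dumbbell 3 k (ℓ + 1)).ContainsCopy G := by
  obtain ⟨hinj, hadj, hch1, hch2⟩ := hg
  have hgne : ∀ a b : ℕ, a < k+ℓ+2 → b < k+ℓ+2 → a ≠ b → g a ≠ g b :=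
    fun a b ha hb hne h => hne (hinj a ha b hb h)
  apply ncopy_contains
  refine buildShift (L := fun j => match j with | 0 => g 0 | 1 => g 1 | 2 => g 2 | _ => x) 4
    (by omega) (by omega) (by omega) ⟨hinj, hadj, hch1, hch2⟩ ?_ ?_ ?_ ?_ ?_
  · intro j hj
    have hj' : j ≤ 2 := by omega
    interval_cases j
    · exact hadj 0 (by omega)
    · exact hadj 1 (by omega)
    · exact h2.symm
  · exact hch1
  · exact h3
  · intro a ha b hb hab
    interval_cases a <;> interval_cases b <;>
      first
        | rfl
        | exact absurd hab (hgne _ _ (by omega) (by omega) (by omega))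
        | exact absurd hab.symm (hxg _ (by omega))
        | exact absurd hab (hxg _ (by omega))
  · intro a ha r hr1 hr2
    interval_cases a <;>
      first
        | exact hgne _ _ (by omega) (by omega) (by omega)
        | exact hxg _ (by omega)


/-- t∼u and a∼t,u : triangle t,a,u; path u,w,p₁,… -/
lemma conC6 {t a : V} (hk : 3 ≤ k) (hl : 1 ≤ ℓ) (hg : NCopy G k ℓ g)
    (htg : ∀ r, r < k + ℓ + 2 → t ≠ g r) (hag : ∀ r, r < k + ℓ + 2 → a ≠ g r)
    (ht0 : G.Adj t (g 0)) (hta : G.Adj t a) (ha0 : G.Adj a (g 0)) :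
    (dumbbell 3 k (ℓ + 1)).ContainsCopy G := by
  obtain ⟨hinj, hadj, hch1, hch2⟩ := hg
  have hgne : ∀ a b : ℕ, a < k+ℓ+2 → b < k+ℓ+2 → a ≠ b → g a ≠ g b :=
    fun a b ha hb hne h => hne (hinj a ha b hb h)
  apply ncopy_contains
  refine buildShift (L := fun j => match j with | 0 => t | 1 => a | 2 => g 0 | _ => g 2) 4
    (by omega) (by omega) (by omega) ⟨hinj, hadj, hch1, hch2⟩ ?_ ?_ ?_ ?_ ?_
  · intro j hj
    have hj' : j ≤ 2 := by omega
    interval_cases j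
    · exact hta
    · exact ha0
    · exact hch1
  · exact ht0
  · exact hadj 2 (by omega)
  · intro a ha b hb hab
    interval_cases a <;> interval_cases b <;>
      first
        | rfl
        | exact absurd hab (hgne _ _ (by omega) (by omega) (by omega))
        | exact absurd hab (G.ne_of_adj hta)
        | exact absurd hab.symm (G.ne_of_adj hta)
        | exact absurd hab (htg _ (by omega))
        | exact absurd hab.symm (htg _ (by omega))
        | exact absurd hab (hag _ (by omega))
        | exact absurd hab.symm (hag _ (by omega))
  · intro a ha r hr1 hr2
    interval_cases a <;>
      first
        | exact hgne _ _ (by omega) (by omega) (by omega)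
        | exact htg _ (by omega)
        | exact hag _ (by omega)


/-- t∼u,w and x∼t,p₁ : triangle u,w,t; path t,x,p₁,… -/
lemma conC7 {t x : V} (hk : 3 ≤ k) (hl : 1 ≤ ℓ) (hg : NCopy G k ℓ g)
    (htg : ∀ r, r < k + ℓ + 2 → t ≠ g r) (hxg : ∀ r, r < k + ℓ + 2 → x ≠ g r)
    (ht0 : G.Adj t (g 0)) (ht2 : G.Adj t (g 2)) (htx : G.Adj t x) (hx3 : G.Adj x (g 3)) :
    (dumbbell 3 k (ℓ + 1)).ContainsCopy G := by
  obtain ⟨hinj, hadj, hch1, hch2⟩ := hg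
  have hgne : ∀ a b : ℕ, a < k+ℓ+2 → b < k+ℓ+2 → a ≠ b → g a ≠ g b :=
    fun a b ha hb hne h => hne (hinj a ha b hb h)
  apply ncopy_contains
  refine buildShift (L := fun j => match j with | 0 => g 0 | 1 => g 2 | 2 => t | _ => x) 4
    (by omega) (by omega) (by omega) ⟨hinj, hadj, hch1, hch2⟩ ?_ ?_ ?_ ?_ ?_
  · intro j hj
    have hj' : j ≤ 2 := by omega
    interval_cases j
    · exact hch1
    · exact ht2.symm
    · exact htx
  · exact ht0.symm
  · exact hx3
  · intro a ha b hb hab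
    interval_cases a <;> interval_cases b <;>
      first
        | rfl
        | exact absurd hab (hgne _ _ (by omega) (by omega) (by omega))
        | exact absurd hab (G.ne_of_adj htx)
        | exact absurd hab.symm (G.ne_of_adj htx)
        | exact absurd hab (htg _ (by omega))
        | exact absurd hab.symm (htg _ (by omega))
        | exact absurd hab (hxg _ (by omega))
        | exact absurd hab.symm (hxg _ (by omega))
  · intro a ha r hr1 hr2
    interval_cases a <;>
      first
        | exact hgne _ _ (by omega) (by omega) (by omega)
        | exact htg _ (by omega)
        | exact hxg _ (by omega)


/-- t∼p₂, b∼v,t : triangle u,w,v; path v,b,t,p₂,… -/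
lemma conC5 {t b : V} (hk : 3 ≤ k) (hl : 2 ≤ ℓ) (hg : NCopy G k ℓ g)
    (htg : ∀ r, r < k + ℓ + 2 → t ≠ g r) (hbg : ∀ r, r < k + ℓ + 2 → b ≠ g r)
    (hb1 : G.Adj b (g 1)) (hbt : G.Adj b t) (ht4 : G.Adj t (g 4)) :
    (dumbbell 3 k (ℓ + 1)).ContainsCopy G := by
  obtain ⟨hinj, hadj, hch1, hch2⟩ := hg
  have hgne : ∀ a b : ℕ, a < k+ℓ+2 → b < k+ℓ+2 → a ≠ b → g a ≠ g b :=
    fun a b ha hb hne h => hne (hinj a ha b hb h)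
  apply ncopy_contains
  refine buildShift (L := fun j => match j with | 0 => g 0 | 1 => g 2 | 2 => g 1 | 3 => b | _ => t) 5
    (by omega) (by omega) (by omega) ⟨hinj, hadj, hch1, hch2⟩ ?_ ?_ ?_ ?_ ?_
  · intro j hj
    have hj' : j ≤ 3 := by omega
    interval_cases j
    · exact hch1
    · exact (hadj 1 (by omega)).symm
    · exact hb1.symm
    · exact hbt
  · exact hadj 0 (by omega)
  · exact ht4
  · intro a ha b hb hab
    interval_cases a <;> interval_cases b <;>
      first
        | rfl
        | exact absurd hab (hgne _ _ (by omega) (by omega) (by omega))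
        | exact absurd hab (G.ne_of_adj hbt)
        | exact absurd hab.symm (G.ne_of_adj hbt)
        | exact absurd hab (htg _ (by omega))
        | exact absurd hab.symm (htg _ (by omega))
        | exact absurd hab (hbg _ (by omega))
        | exact absurd hab.symm (hbg _ (by omega))
  · intro a ha r hr1 hr2
    interval_cases a <;>
      first
        | exact hgne _ _ (by omega) (by omega) (by omega)
        | exact htg _ (by omega)
        | exact hbg _ (by omega)


/-- v∼p₁, u∼p₂, t∼u,w : triangle v,p₁,w; path w,t,u,p₂,… -/
lemma conCVI {t : V} (hk : 3 ≤ k) (hl : 2 ≤ ℓ) (hg : NCopy G k ℓ g)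
    (htg : ∀ r, r < k + ℓ + 2 → t ≠ g r)
    (ht0 : G.Adj t (g 0)) (ht2 : G.Adj t (g 2)) (h13 : G.Adj (g 1) (g 3)) (h04 : G.Adj (g 0) (g 4)) :
    (dumbbell 3 k (ℓ + 1)).ContainsCopy G := by
  obtain ⟨hinj, hadj, hch1, hch2⟩ := hg
  have hgne : ∀ a b : ℕ, a < k+ℓ+2 → b < k+ℓ+2 → a ≠ b → g a ≠ g b :=
    fun a b ha hb hne h => hne (hinj a ha b hb h)
  apply ncopy_contains
  refine buildShift (L := fun j => match j with | 0 => g 1 | 1 => g 3 | 2 => g 2 | 3 => t | _ => g 0) 5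
    (by omega) (by omega) (by omega) ⟨hinj, hadj, hch1, hch2⟩ ?_ ?_ ?_ ?_ ?_
  · intro j hj
    have hj' : j ≤ 3 := by omega
    interval_cases j
    · exact h13
    · exact (hadj 2 (by omega)).symm
    · exact ht2.symm
    · exact ht0
  · exact hadj 1 (by omega)
  · exact h04
  · intro a ha b hb hab
    interval_cases a <;> interval_cases b <;>
      first
        | rfl
        | exact absurd hab (hgne _ _ (by omega) (by omega) (by omega))
        | exact absurd hab (htg _ (by omega))
        | exact absurd hab.symm (htg _ (by omega))
  · intro a ha r hr1 hr2
    interval_cases a <;>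
      first
        | exact hgne _ _ (by omega) (by omega) (by omega)
        | exact htg _ (by omega)

end cons

section cons2
variable {V : Type*} {G : SimpleGraph V} {k : ℕ} {g : ℕ → V}

/-- ℓ = 1, t∼w and t∼c₁ : path w,t,c₁ into the rotated cycle. -/
lemma conIIIa {t : V} (hk : 3 ≤ k) (hg : NCopy G k 1 g)
    (htg : ∀ r, r < k + 3 → t ≠ g r)
    (ht2 : G.Adj t (g 2)) (ht4 : G.Adj t (g 4)) :
    (dumbbell 3 k 2).ContainsCopy G := by
  obtain ⟨hinj, hadj, hch1, hch2⟩ := hg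
  apply ncopy_contains (k := k) (ℓ := 2)
    (g := fun j => if j ≤ 2 then g j else if j = 3 then t else if j ≤ k + 2 then g j else g 3)
  refine ⟨?_, ?_, ?_, ?_⟩
  · intro a ha b hb hab
    dsimp only at hab
    split_ifs at hab <;>
      first
        | omega
        | exact hinj a (by omega) b (by omega) hab
        | ((have h := hinj a (by omega) b (by omega) hab); omega)
        | ((have h := hinj a (by omega) 3 (by omega) hab); omega)
        | ((have h := hinj 3 (by omega) b (by omega) hab); omega)
        | exact absurd hab (htg _ (by omega))
        | exact absurd hab.symm (htg _ (by omega))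
  · intro j hj
    dsimp only
    split_ifs <;>
      first
        | omega
        | exact hadj j (by omega)
        | ((have hje : j = 2 := by omega); subst hje; exact ht2.symm)
        | ((have hje : j = 3 := by omega); subst hje; exact ht4)
        | ((have hje : j = k + 2 := by omega); subst hje; exact hch2.symm)
  · dsimp only
    rw [if_pos (by omega : (0:ℕ) ≤ 2), if_pos (by omega : (2:ℕ) ≤ 2)]
    exact hch1
  · dsimp only
    rw [show (2:ℕ) + 2 = 4 from rfl, show k + 2 + 1 = k + 3 from rfl]
    rw [if_neg (by omega : ¬(4:ℕ) ≤ 2), if_neg (by omega : ¬(4:ℕ) = 3),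
        if_pos (by omega : (4:ℕ) ≤ k + 2), if_neg (by omega : ¬k + 3 ≤ 2),
        if_neg (by omega : ¬k + 3 = 3), if_neg (by omega : ¬k + 3 ≤ k + 2)]
    exact (hadj 3 (by omega)).symm

/-- ℓ = 1, t∼w and t∼c₂ : path w,t,c₂ into the rotated cycle. -/
lemma conIIIb {t : V} (hk : 3 ≤ k) (hg : NCopy G k 1 g)
    (htg : ∀ r, r < k + 3 → t ≠ g r)
    (ht2 : G.Adj t (g 2)) (ht5 : G.Adj t (g 5)) :
    (dumbbell 3 k 2).ContainsCopy G := by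
  obtain ⟨hinj, hadj, hch1, hch2⟩ := hg
  apply ncopy_contains (k := k) (ℓ := 2)
    (g := fun j => if j ≤ 2 then g j else if j = 3 then t else if j ≤ k + 1 then g (j + 1)
      else if j = k + 2 then g 3 else g 4)
  refine ⟨?_, ?_, ?_, ?_⟩
  · intro a ha b hb hab
    dsimp only at hab
    split_ifs at hab <;>
      first
        | omega
        | exact hinj a (by omega) b (by omega) hab
        | ((have h := hinj a (by omega) b (by omega) hab); omega)
        | ((have h := hinj a (by omega) (b + 1) (by omega) hab); omega)
        | ((have h := hinj (a + 1) (by omega) b (by omega) hab); omega)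
        | ((have h := hinj (a + 1) (by omega) (b + 1) (by omega) hab); omega)
        | ((have h := hinj a (by omega) 3 (by omega) hab); omega)
        | ((have h := hinj 3 (by omega) b (by omega) hab); omega)
        | ((have h := hinj a (by omega) 4 (by omega) hab); omega)
        | ((have h := hinj 4 (by omega) b (by omega) hab); omega)
        | ((have h := hinj (a + 1) (by omega) 3 (by omega) hab); omega)
        | ((have h := hinj 3 (by omega) (b + 1) (by omega) hab); omega)
        | ((have h := hinj (a + 1) (by omega) 4 (by omega) hab); omega)
        | ((have h := hinj 4 (by omega) (b + 1) (by omega) hab); omega)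
        | ((have h := hinj 3 (by omega) 4 (by omega) hab); omega)
        | ((have h := hinj 4 (by omega) 3 (by omega) hab); omega)
        | exact absurd hab (htg _ (by omega))
        | exact absurd hab.symm (htg _ (by omega))
  · intro j hj
    dsimp only
    split_ifs <;>
      first
        | omega
        | exact hadj j (by omega)
        | exact hadj (j + 1) (by omega)
        | ((have hje : j = 2 := by omega); subst hje; exact ht2.symm)
        | ((have hje : j = 3 := by omega); subst hje; exact ht5)
        | ((have hje : j = k + 1 := by omega); subst hje; exact hch2.symm)
        | ((have hje : j = k + 2 := by omega); subst hje; exact hadj 3 (by omega))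
  · dsimp only
    rw [if_pos (by omega : (0:ℕ) ≤ 2), if_pos (by omega : (2:ℕ) ≤ 2)]
    exact hch1
  · dsimp only
    rw [show (2:ℕ) + 2 = 4 from rfl, show k + 2 + 1 = k + 3 from rfl]
    rw [if_neg (by omega : ¬(4:ℕ) ≤ 2), if_neg (by omega : ¬(4:ℕ) = 3),
        if_pos (by omega : (4:ℕ) ≤ k + 1), if_neg (by omega : ¬k + 3 ≤ 2),
        if_neg (by omega : ¬k + 3 = 3), if_neg (by omega : ¬k + 3 ≤ k + 1),
        if_neg (by omega : ¬k + 3 = k + 2)]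
    exact (hadj 4 (by omega)).symm
end cons2


section counting
variable {V : Type*} [Fintype V] [DecidableEq V] {G : SimpleGraph V} [DecidableRel G.Adj]

lemma aux {k ℓ : ℕ} {g : ℕ → V} {t : V}
    (hk : 3 ≤ k) (hl : 1 ≤ ℓ) (hn : 4 * k + 4 * ℓ ≤ Fintype.card V)
    (hdeg : ∀ v : V, Fintype.card V / 2 ≤ G.degree v)
    (hg : NCopy G k ℓ g)
    (htg : ∀ r, r < k + ℓ + 2 → t ≠ g r)
    (ht0 : G.Adj t (g 0)) (ht2 : G.Adj t (g 2))
    (hfail : ¬ (dumbbell 3 k (ℓ + 1)).ContainsCopy G) : False := by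
  obtain ⟨hinj, hadj, hch1, hch2⟩ := hg
  have hgN : NCopy G k ℓ g := ⟨hinj, hadj, hch1, hch2⟩
  have hgne : ∀ a b : ℕ, a < k + ℓ + 2 → b < k + ℓ + 2 → a ≠ b → g a ≠ g b :=
    fun a b ha hb hne h => hne (hinj a ha b hb h)
  set n := Fintype.card V with hndef
  set S : Finset V := (Finset.range (k + ℓ + 2)).image g with hSdef
  have hgS : ∀ r, r < k + ℓ + 2 → g r ∈ S := by
    intro r hr
    rw [hSdef]
    exact Finset.mem_image.2 ⟨r, Finset.mem_range.2 hr, rfl⟩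
  have hnotS : ∀ x : V, x ∉ S → ∀ r, r < k + ℓ + 2 → x ≠ g r := by
    intro x hx r hr h
    exact hx (h ▸ hgS r hr)
  have hScard : S.card = k + ℓ + 2 := by
    rw [hSdef, Finset.card_image_of_injOn, Finset.card_range]
    intro a ha b hb hab
    exact hinj a (by simpa using ha) b (by simpa using hb) hab
  have hSn : k + ℓ + 2 ≤ n := by
    rw [← hScard]
    exact Finset.card_le_univ S
  have hub : ∀ x, x ∈ S → n / 2 ≤ (G.neighborFinset x \ S).card + (k + ℓ + 1) := by
    intro x hx
    have h1 : (G.neighborFinset x ∩ S) ⊆ S.erase x := by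
      intro y hy
      rw [Finset.mem_inter] at hy
      have hadjy : G.Adj x y := by simpa using hy.1
      exact Finset.mem_erase.2 ⟨(G.ne_of_adj hadjy).symm, hy.2⟩
    have h2 := Finset.card_le_card h1
    have e1 := Finset.card_erase_of_mem hx
    have h3 := Finset.card_inter_add_card_sdiff (G.neighborFinset x) S
    have h4 : (G.neighborFinset x).card = G.degree x := G.card_neighborFinset_eq_degree x
    have h5 := hdeg x
    omega
  have hub2 : ∀ x z, x ∈ S → z ∈ S → x ≠ z → ¬ G.Adj x z →
      n / 2 ≤ (G.neighborFinset x \ S).card + (k + ℓ) := by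
    intro x z hx hz hxz hna
    have h1 : (G.neighborFinset x ∩ S) ⊆ (S.erase x).erase z := by
      intro y hy
      rw [Finset.mem_inter] at hy
      have hadjy : G.Adj x y := by simpa using hy.1
      refine Finset.mem_erase.2 ⟨?_, Finset.mem_erase.2 ⟨(G.ne_of_adj hadjy).symm, hy.2⟩⟩
      rintro rfl
      exact hna hadjy
    have h2 := Finset.card_le_card h1
    have e1 := Finset.card_erase_of_mem hx
    have e2 := Finset.card_erase_of_mem (Finset.mem_erase.2 ⟨hxz.symm, hz⟩ :
      z ∈ S.erase x)
    have h3 := Finset.card_inter_add_card_sdiff (G.neighborFinset x) S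
    have h4 : (G.neighborFinset x).card = G.degree x := G.card_neighborFinset_eq_degree x
    have h5 := hdeg x
    omega
  set A : Finset V := G.neighborFinset (g 0) \ S with hAdef
  set D : Finset V := G.neighborFinset (g 3) \ S with hDdef
  have hmemA : ∀ x, x ∈ A → G.Adj (g 0) x ∧ x ∉ S := by
    intro x hx
    rw [hAdef, Finset.mem_sdiff] at hx
    exact ⟨by simpa using hx.1, hx.2⟩
  have hmemD : ∀ x, x ∈ D → G.Adj (g 3) x ∧ x ∉ S := by
    intro x hx
    rw [hDdef, Finset.mem_sdiff] at hx
    exact ⟨by simpa using hx.1, hx.2⟩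
  have hAD : Disjoint A D := by
    rw [Finset.disjoint_left]
    intro x hxA hxD
    obtain ⟨h0, hxS⟩ := hmemA x hxA
    obtain ⟨h3, -⟩ := hmemD x hxD
    exact hfail (conC2 hk hl hgN (hnotS x hxS) h0.symm h3.symm)
  have hNtA : ∀ x ∈ A, ¬ G.Adj t x := by
    intro x hxA htx
    obtain ⟨h0, hxS⟩ := hmemA x hxA
    exact hfail (conC6 hk hl hgN htg (hnotS x hxS) ht0 htx h0.symm)
  have hNtD : ∀ x ∈ D, ¬ G.Adj t x := by
    intro x hxD htx
    obtain ⟨h3, hxS⟩ := hmemD x hxD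
    exact hfail (conC7 hk hl hgN htg (hnotS x hxS) ht0 ht2 htx h3.symm)
  have hNtv : ¬ G.Adj t (g 1) := fun h => hfail (conC1 hk hl hgN htg ht0 h)
  have hNtp : ¬ G.Adj t (g 3) := fun h => hfail (conC4 hk hl hgN htg ht2 h)
  have hAcard : n / 2 ≤ A.card + (k + ℓ + 1) := hub (g 0) (hgS 0 (by omega))
  have hDcard : n / 2 ≤ D.card + (k + ℓ + 1) := hub (g 3) (hgS 3 (by omega))
  have hdegt := hdeg t
  have hdisj : ∀ P : Finset V, Disjoint A P → Disjoint D P → (∀ x ∈ P, ¬ G.Adj t x) →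
      A.card + D.card + P.card ≤ n - G.degree t := by
    intro P hAP hDP hPnt
    have hsub : A ∪ D ∪ P ⊆ (G.neighborFinset t)ᶜ := by
      intro x hx
      rw [Finset.mem_compl]
      intro hmem
      have htx : G.Adj t x := by simpa using hmem
      rcases Finset.mem_union.1 hx with hx' | hxP
      · rcases Finset.mem_union.1 hx' with hxA | hxD
        · exact hNtA x hxA htx
        · exact hNtD x hxD htx
      · exact hPnt x hxP htx
    have hcup : (A ∪ D ∪ P).card = A.card + D.card + P.card := by
      rw [Finset.card_union_of_disjoint (Finset.disjoint_union_left.2 ⟨hAP, hDP⟩),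
        Finset.card_union_of_disjoint hAD]
    have hcompl : (G.neighborFinset t)ᶜ.card = n - G.degree t := by
      rw [Finset.card_compl, SimpleGraph.card_neighborFinset_eq_degree]
    calc A.card + D.card + P.card = (A ∪ D ∪ P).card := hcup.symm
      _ ≤ (G.neighborFinset t)ᶜ.card := Finset.card_le_card hsub
      _ = n - G.degree t := hcompl
  -- Case split on ℓ = 1 vs ℓ ≥ 2
  rcases eq_or_lt_of_le hl with hl1 | hl2
  · -- ℓ = 1 : extend to a rotated cycle junction
    obtain rfl : ℓ = 1 := hl1.symm
    by_cases h4 : G.Adj t (g 4)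
    · exact hfail (conIIIa hk hgN htg ht2 h4)
    by_cases h5 : G.Adj t (g 5)
    · exact hfail (conIIIb hk hgN htg ht2 h5)
    have hPcard : ({g 1, g 3, g 4, g 5} : Finset V).card = 4 := by
      rw [Finset.card_insert_of_notMem (by
            simp only [Finset.mem_insert, Finset.mem_singleton]
            push_neg
            exact ⟨hgne 1 3 (by omega) (by omega) (by omega),
              hgne 1 4 (by omega) (by omega) (by omega),
              hgne 1 5 (by omega) (by omega) (by omega)⟩),
          Finset.card_insert_of_notMem (by
            simp only [Finset.mem_insert, Finset.mem_singleton]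
            push_neg
            exact ⟨hgne 3 4 (by omega) (by omega) (by omega),
              hgne 3 5 (by omega) (by omega) (by omega)⟩),
          Finset.card_insert_of_notMem (by
            simp only [Finset.mem_singleton]
            exact hgne 4 5 (by omega) (by omega) (by omega)),
          Finset.card_singleton]
    have hPS : ∀ x ∈ ({g 1, g 3, g 4, g 5} : Finset V), x ∈ S := by
      intro x hx
      simp only [Finset.mem_insert, Finset.mem_singleton] at hx
      rcases hx with rfl | rfl | rfl | rfl <;> exact hgS _ (by omega)
    have hcnt := hdisj {g 1, g 3, g 4, g 5}
      (Finset.disjoint_left.2 fun x hxA hxP => absurd (hPS x hxP) (hmemA x hxA).2)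
      (Finset.disjoint_left.2 fun x hxD hxP => absurd (hPS x hxP) (hmemD x hxD).2)
      (by
        intro x hx
        simp only [Finset.mem_insert, Finset.mem_singleton] at hx
        rcases hx with rfl | rfl | rfl | rfl
        · exact hNtv
        · exact hNtp
        · exact h4
        · exact h5)
    rw [hPcard] at hcnt
    omega
  · -- ℓ ≥ 2
    by_cases hp2 : G.Adj t (g 4)
    · set B : Finset V := G.neighborFinset (g 1) \ S with hBdef
      have hmemB : ∀ x, x ∈ B → G.Adj (g 1) x ∧ x ∉ S := by
        intro x hx
        rw [hBdef, Finset.mem_sdiff] at hx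
        exact ⟨by simpa using hx.1, hx.2⟩
      by_cases hB : ∃ b ∈ B, G.Adj t b
      · obtain ⟨b, hbB, htb⟩ := hB
        obtain ⟨h1b, hbS⟩ := hmemB b hbB
        exact hfail (conC5 hk (by omega : 2 ≤ ℓ) hgN htg (hnotS b hbS) h1b.symm htb.symm hp2)
      · push_neg at hB
        have hP2card : ({g 1, g 3} : Finset V).card = 2 := by
          rw [Finset.card_insert_of_notMem (by
              simp only [Finset.mem_singleton]
              exact hgne 1 3 (by omega) (by omega) (by omega)),
            Finset.card_singleton]
        have hP2S : ∀ x ∈ ({g 1, g 3} : Finset V), x ∈ S := by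
          intro x hx
          simp only [Finset.mem_insert, Finset.mem_singleton] at hx
          rcases hx with rfl | rfl <;> exact hgS _ (by omega)
        have hBP2 : Disjoint B ({g 1, g 3} : Finset V) :=
          Finset.disjoint_left.2 fun x hxB hxP => absurd (hP2S x hxP) (hmemB x hxB).2
        have hABd : Disjoint A B := by
          rw [Finset.disjoint_left]
          intro x hxA hxB
          obtain ⟨h0, hxS⟩ := hmemA x hxA
          obtain ⟨h1, -⟩ := hmemB x hxB
          exact hfail (conC1 hk hl hgN (hnotS x hxS) h0.symm h1.symm)
        have hDBd : Disjoint D B := by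
          rw [Finset.disjoint_left]
          intro x hxD hxB
          obtain ⟨h3, hxS⟩ := hmemD x hxD
          obtain ⟨h1, -⟩ := hmemB x hxB
          exact hfail (conC3 hk hl hgN (hnotS x hxS) h1.symm h3.symm)
        have hcnt := hdisj (B ∪ {g 1, g 3})
          (Finset.disjoint_union_right.2 ⟨hABd,
            Finset.disjoint_left.2 fun x hxA hxP => absurd (hP2S x hxP) (hmemA x hxA).2⟩)
          (Finset.disjoint_union_right.2 ⟨hDBd,
            Finset.disjoint_left.2 fun x hxD hxP => absurd (hP2S x hxP) (hmemD x hxD).2⟩)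
          (by
            intro x hx
            rcases Finset.mem_union.1 hx with hxB | hxP
            · exact hB x hxB
            · simp only [Finset.mem_insert, Finset.mem_singleton] at hxP
              rcases hxP with rfl | rfl
              · exact hNtv
              · exact hNtp)
        have hBcup : (B ∪ {g 1, g 3} : Finset V).card = B.card + 2 := by
          rw [Finset.card_union_of_disjoint hBP2, hP2card]
        have hBcard : n / 2 ≤ B.card + (k + ℓ + 1) := hub (g 1) (hgS 1 (by omega))
        rw [hBcup] at hcnt
        omega
    · -- t not adjacent to p₂ = g 4
      have hP3card : ({g 1, g 3, g 4} : Finset V).card = 3 := by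
        rw [Finset.card_insert_of_notMem (by
              simp only [Finset.mem_insert, Finset.mem_singleton]
              push_neg
              exact ⟨hgne 1 3 (by omega) (by omega) (by omega),
                hgne 1 4 (by omega) (by omega) (by omega)⟩),
            Finset.card_insert_of_notMem (by
              simp only [Finset.mem_singleton]
              exact hgne 3 4 (by omega) (by omega) (by omega)),
            Finset.card_singleton]
      have hP3S : ∀ x ∈ ({g 1, g 3, g 4} : Finset V), x ∈ S := by
        intro x hx
        simp only [Finset.mem_insert, Finset.mem_singleton] at hx
        rcases hx with rfl | rfl | rfl <;> exact hgS _ (by omega)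
      have hcnt := hdisj {g 1, g 3, g 4}
        (Finset.disjoint_left.2 fun x hxA hxP => absurd (hP3S x hxP) (hmemA x hxA).2)
        (Finset.disjoint_left.2 fun x hxD hxP => absurd (hP3S x hxP) (hmemD x hxD).2)
        (by
          intro x hx
          simp only [Finset.mem_insert, Finset.mem_singleton] at hx
          rcases hx with rfl | rfl | rfl
          · exact hNtv
          · exact hNtp
          · exact hp2)
      rw [hP3card] at hcnt
      have hu4 : G.Adj (g 0) (g 4) := by
        by_contra hu4
        have hA2 : n / 2 ≤ A.card + (k + ℓ) := hub2 (g 0) (g 4) (hgS 0 (by omega))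
          (hgS 4 (by omega)) (hgne 0 4 (by omega) (by omega) (by omega)) hu4
        omega
      have hv3 : G.Adj (g 1) (g 3) := by
        by_contra hv3
        have hD2 : n / 2 ≤ D.card + (k + ℓ) := hub2 (g 3) (g 1) (hgS 3 (by omega))
          (hgS 1 (by omega)) (hgne 3 1 (by omega) (by omega) (by omega)) (fun h => hv3 h.symm)
        omega
      exact hfail (conCVI hk (by omega : 2 ≤ ℓ) hgN htg ht0 ht2 hv3 hu4)

lemma step {k ℓ : ℕ} {g : ℕ → V}
    (hk : 3 ≤ k) (hl : 1 ≤ ℓ) (hn : 4 * k + 4 * ℓ ≤ Fintype.card V)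
    (hdeg : ∀ v : V, Fintype.card V / 2 ≤ G.degree v)
    (hg : NCopy G k ℓ g) : (dumbbell 3 k (ℓ + 1)).ContainsCopy G := by
  by_contra hfail
  obtain ⟨hinj, hadj, hch1, hch2⟩ := hg
  have hgN : NCopy G k ℓ g := ⟨hinj, hadj, hch1, hch2⟩
  set n := Fintype.card V with hndef
  set S : Finset V := (Finset.range (k + ℓ + 2)).image g with hSdef
  have hgS : ∀ r, r < k + ℓ + 2 → g r ∈ S := by
    intro r hr
    rw [hSdef]
    exact Finset.mem_image.2 ⟨r, Finset.mem_range.2 hr, rfl⟩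
  have hnotS : ∀ x : V, x ∉ S → ∀ r, r < k + ℓ + 2 → x ≠ g r := by
    intro x hx r hr h
    exact hx (h ▸ hgS r hr)
  have hScard : S.card = k + ℓ + 2 := by
    rw [hSdef, Finset.card_image_of_injOn, Finset.card_range]
    intro a ha b hb hab
    exact hinj a (by simpa using ha) b (by simpa using hb) hab
  by_cases hX : ∃ x, x ∈ G.neighborFinset (g 2) \ S ∧ (G.Adj x (g 0) ∨ G.Adj x (g 1))
  · obtain ⟨t, htW, ht01⟩ := hX
    rw [Finset.mem_sdiff] at htW
    have ht2 : G.Adj t (g 2) := (show G.Adj (g 2) t by simpa using htW.1).symm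
    have htg : ∀ r, r < k + ℓ + 2 → t ≠ g r := hnotS t htW.2
    rcases ht01 with ht0 | ht1
    · exact aux hk hl hn hdeg hgN htg ht0 ht2 hfail
    · have hgsw := ncopy_swap hl hgN
      have htgsw : ∀ r, r < k + ℓ + 2 →
          t ≠ (fun j => g (match j with | 0 => 1 | 1 => 0 | n => n)) r := by
        intro r hr
        match r with
        | 0 => exact htg 1 (by omega)
        | 1 => exact htg 0 (by omega)
        | (r + 2) => exact htg (r + 2) hr
      exact aux hk hl hn hdeg hgsw htgsw ht1 ht2 hfail
  · push_neg at hX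
    have hub : ∀ x, x ∈ S → n / 2 ≤ (G.neighborFinset x \ S).card + (k + ℓ + 1) := by
      intro x hx
      have h1 : (G.neighborFinset x ∩ S) ⊆ S.erase x := by
        intro y hy
        rw [Finset.mem_inter] at hy
        have hadjy : G.Adj x y := by simpa using hy.1
        exact Finset.mem_erase.2 ⟨(G.ne_of_adj hadjy).symm, hy.2⟩
      have h2 := Finset.card_le_card h1
      have e1 := Finset.card_erase_of_mem hx
      have h3 := Finset.card_inter_add_card_sdiff (G.neighborFinset x) S
      have h4 : (G.neighborFinset x).card = G.degree x := G.card_neighborFinset_eq_degree x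
      have h5 := hdeg x
      omega
    set A : Finset V := G.neighborFinset (g 0) \ S with hAdef
    set B : Finset V := G.neighborFinset (g 1) \ S with hBdef
    set D : Finset V := G.neighborFinset (g 3) \ S with hDdef
    set W : Finset V := G.neighborFinset (g 2) \ S with hWdef
    have hmem : ∀ (r : ℕ) (x : V), x ∈ G.neighborFinset (g r) \ S → G.Adj (g r) x ∧ x ∉ S := by
      intro r x hx
      rw [Finset.mem_sdiff] at hx
      exact ⟨by simpa using hx.1, hx.2⟩
    have hAB : Disjoint A B := by
      rw [Finset.disjoint_left]
      intro x hxA hxB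
      obtain ⟨h0, hxS⟩ := hmem 0 x hxA
      obtain ⟨h1, -⟩ := hmem 1 x hxB
      exact hfail (conC1 hk hl hgN (hnotS x hxS) h0.symm h1.symm)
    have hAD : Disjoint A D := by
      rw [Finset.disjoint_left]
      intro x hxA hxD
      obtain ⟨h0, hxS⟩ := hmem 0 x hxA
      obtain ⟨h3, -⟩ := hmem 3 x hxD
      exact hfail (conC2 hk hl hgN (hnotS x hxS) h0.symm h3.symm)
    have hBD : Disjoint B D := by
      rw [Finset.disjoint_left]
      intro x hxB hxD
      obtain ⟨h1, hxS⟩ := hmem 1 x hxB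
      obtain ⟨h3, -⟩ := hmem 3 x hxD
      exact hfail (conC3 hk hl hgN (hnotS x hxS) h1.symm h3.symm)
    have hAW : Disjoint A W := by
      rw [Finset.disjoint_left]
      intro x hxA hxW
      obtain ⟨h0, -⟩ := hmem 0 x hxA
      exact (hX x hxW).1 h0.symm
    have hBW : Disjoint B W := by
      rw [Finset.disjoint_left]
      intro x hxB hxW
      obtain ⟨h1, -⟩ := hmem 1 x hxB
      exact (hX x hxW).2 h1.symm
    have hDW : Disjoint D W := by
      rw [Finset.disjoint_left]
      intro x hxD hxW
      obtain ⟨h3, hxS⟩ := hmem 3 x hxD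
      obtain ⟨h2, -⟩ := hmem 2 x hxW
      exact hfail (conC4 hk hl hgN (hnotS x hxS) h2.symm h3.symm)
    have hsub : A ∪ B ∪ D ∪ W ⊆ Sᶜ := by
      intro x hx
      rw [Finset.mem_compl]
      rcases Finset.mem_union.1 hx with hx' | hxW
      · rcases Finset.mem_union.1 hx' with hx'' | hxD
        · rcases Finset.mem_union.1 hx'' with hxA | hxB
          · exact (hmem 0 x hxA).2
          · exact (hmem 1 x hxB).2
        · exact (hmem 3 x hxD).2
      · exact (hmem 2 x hxW).2
    have hcup : (A ∪ B ∪ D ∪ W).card = A.card + B.card + D.card + W.card := by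
      rw [Finset.card_union_of_disjoint, Finset.card_union_of_disjoint,
        Finset.card_union_of_disjoint hAB]
      · exact Finset.disjoint_union_left.2 ⟨hAD, hBD⟩
      · exact Finset.disjoint_union_left.2 ⟨Finset.disjoint_union_left.2 ⟨hAW, hBW⟩, hDW⟩
    have hcompl : (Sᶜ : Finset V).card = n - S.card := Finset.card_compl S
    have hle := Finset.card_le_card hsub
    rw [hcup, hcompl] at hle
    have hA1 : n / 2 ≤ A.card + (k + ℓ + 1) := hub (g 0) (hgS 0 (by omega))
    have hB1 : n / 2 ≤ B.card + (k + ℓ + 1) := hub (g 1) (hgS 1 (by omega))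
    have hD1 : n / 2 ≤ D.card + (k + ℓ + 1) := hub (g 3) (hgS 3 (by omega))
    have hW1 : n / 2 ≤ W.card + (k + ℓ + 1) := hub (g 2) (hgS 2 (by omega))
    omega

end counting

theorem statement7 {V : Type*} [Fintype V] (q k : ℕ) (hq : 2 ≤ q) (hk : 3 ≤ k)
    (G : SimpleGraph V) [DecidableRel G.Adj]
    (hcard : 4 * k + 4 * q - 4 ≤ Fintype.card V)
    (hdeg : ∀ v : V, Fintype.card V / 2 ≤ G.degree v)
    (h : (dumbbell 3 k 1).ContainsCopy G) :
    ∀ i : ℕ, 2 ≤ i → i ≤ q → (dumbbell 3 k i).ContainsCopy G := by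
  classical
  have main : ∀ j : ℕ, 1 ≤ j → j ≤ q → (dumbbell 3 k j).ContainsCopy G := by
    intro j
    induction j with
    | zero => intro h1 _; exact absurd h1 (by omega)
    | succ m ih =>
      intro h1 hq'
      rcases Nat.eq_zero_or_pos m with rfl | hm
      · exact h
      · have hc := ih hm (by omega)
        obtain ⟨g, hg⟩ := contains_ncopy hk hc
        have hn : 4 * k + 4 * m ≤ Fintype.card V := by omega
        exact step hk hm hn hdeg hg
  intro i hi2 hiq
  exact main i (by omega) hiq
end
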